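/- arXiv:2603.26650 — 7 statements merged into one kernel-verified Lean document; each statement's English description precedes it below -/
import Mathlib

section
/- Let d ≥ 1 be an integer, m ∈ (m₁,1)∪(1,m₂), and c ∈ ℝ. The function P_⋆(t,x,v) := c·((1−A)t)^{2(1−m)/(m−m₁)} + ((1+A)/(2(1−A)t))·( |v − x/((1−A)t)|² + A·|x/((1−A)t)|² ) satisfies the pressure equation ∂_t P_⋆ = (1−m)·P_⋆·Δ_v P_⋆ − |∇_v P_⋆|² − v·∇_x P_⋆ at every point (t,x,v) ∈ (0,∞)×ℝ^d×ℝ^d. -/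
open MeasureTheory Real Filter Set
open scoped RealInnerProductSpace

noncomputable section

/-- Phase space coordinate space: `ℝ^d`. -/
abbrev Phase (d : ℕ) : Type := EuclideanSpace ℝ (Fin d)

/-- Test functions in `C_c^∞((0,∞) × ℝ^d × ℝ^d)`. -/
def IsTestFn (d : ℕ) (φ : ℝ × Phase d × Phase d → ℝ) : Prop :=
  ContDiff ℝ (⊤ : ℕ∞) φ ∧ HasCompactSupport φ ∧
    tsupport φ ⊆ {p : ℝ × Phase d × Phase d | 0 < p.1}

/-- `∂_t φ` at `q`. -/
noncomputable def dtD (d : ℕ) (φ : ℝ × Phase d × Phase d → ℝ)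
    (q : ℝ × Phase d × Phase d) : ℝ :=
  fderiv ℝ φ q (1, 0, 0)

/-- `w · ∇_x φ` at `q`. -/
noncomputable def dxD (d : ℕ) (φ : ℝ × Phase d × Phase d → ℝ)
    (q : ℝ × Phase d × Phase d) (w : Phase d) : ℝ :=
  fderiv ℝ φ q (0, w, 0)

/-- `w · ∇_v φ` at `q`. -/
noncomputable def dvD (d : ℕ) (φ : ℝ × Phase d × Phase d → ℝ)
    (q : ℝ × Phase d × Phase d) (w : Phase d) : ℝ :=
  fderiv ℝ φ q (0, 0, w)

/-- `Δ_v φ` at `q` (Laplacian in the velocity variable). -/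
noncomputable def lapvD (d : ℕ) (φ : ℝ × Phase d × Phase d → ℝ)
    (q : ℝ × Phase d × Phase d) : ℝ :=
  ∑ i : Fin d,
    fderiv ℝ (fun p => fderiv ℝ φ p ((0 : ℝ), (0 : Phase d), EuclideanSpace.single i 1)) q
      ((0 : ℝ), (0 : Phase d), EuclideanSpace.single i 1)

/-- Laplacian of a function of the velocity variable only. -/
noncomputable def lapv (d : ℕ) (u : Phase d → ℝ) (v : Phase d) : ℝ :=
  ∑ i : Fin d,
    fderiv ℝ (fun w => fderiv ℝ u w (EuclideanSpace.single i 1)) v (EuclideanSpace.single i 1)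

/-- Distributional (weak) formulation of (E): `∂_t f + v·∇_x f = Δ_v (f^m)`. -/
def WeakSolE (d : ℕ) (m : ℝ) (f : ℝ → Phase d → Phase d → ℝ) : Prop :=
  ∀ φ : ℝ × Phase d × Phase d → ℝ, IsTestFn d φ →
    (∫ q : ℝ × Phase d × Phase d,
      (f q.1 q.2.1 q.2.2 * dtD d φ q + f q.1 q.2.1 q.2.2 * dxD d φ q q.2.2
        + f q.1 q.2.1 q.2.2 ^ m * lapvD d φ q)) = 0

/-- Distributional (weak) formulation of the rescaled equation (E'):
`∂_t g + v·∇_x g − A x·∇_v g = Δ_v (g^m) + (1+A) ∇_v·(v g)`. -/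
def WeakSolE' (d : ℕ) (m A : ℝ) (g : ℝ → Phase d → Phase d → ℝ) : Prop :=
  ∀ φ : ℝ × Phase d × Phase d → ℝ, IsTestFn d φ →
    (∫ q : ℝ × Phase d × Phase d,
      (g q.1 q.2.1 q.2.2 * dtD d φ q + g q.1 q.2.1 q.2.2 * dxD d φ q q.2.2
        - g q.1 q.2.1 q.2.2 * A * dvD d φ q q.2.1
        + g q.1 q.2.1 q.2.2 ^ m * lapvD d φ q
        - (1 + A) * g q.1 q.2.1 q.2.2 * dvD d φ q q.2.2)) = 0

/-- `f` is nonnegative and belongs to `C([0,∞); L¹(ℝ^d × ℝ^d))`. -/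
def RegSol (d : ℕ) (f : ℝ → Phase d → Phase d → ℝ) : Prop :=
  (∀ t x v, 0 ≤ f t x v) ∧
  (∀ t, 0 ≤ t → Integrable (fun p : Phase d × Phase d => f t p.1 p.2)) ∧
  (∀ t₀, 0 ≤ t₀ →
    Tendsto (fun t => ∫ p : Phase d × Phase d, |f t p.1 p.2 - f t₀ p.1 p.2|)
      (nhdsWithin t₀ (Ici 0)) (nhds 0))

/-- The self-similar profile `g_γ`. -/
noncomputable def gP (d : ℕ) (m A γ : ℝ) (x v : Phase d) : ℝ :=
  (max ((1 - m) / m * (γ + (1 + A) / 2 * ‖v‖ ^ 2 + (1 + A) * A / 2 * ‖x‖ ^ 2)) 0)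
    ^ (1 / (m - 1))

/-- Assumption (I) on the initial datum `f₀`. -/
def AssumpI (d : ℕ) (m A γ₁ γ₂ : ℝ) (f₀ : Phase d → Phase d → ℝ) : Prop :=
  Integrable (fun p : Phase d × Phase d => f₀ p.1 p.2) ∧
  (∫ p : Phase d × Phase d, |f₀ p.1 p.2|) = 1 ∧
  ∀ᵐ p : Phase d × Phase d ∂volume,
    gP d m A γ₁ p.1 (p.2 - p.1) ≤ f₀ p.1 p.2 ∧ f₀ p.1 p.2 ≤ gP d m A γ₂ p.1 (p.2 - p.1)

/-- The fundamental solution `f_⋆` of (E). -/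
noncomputable def fStar (d : ℕ) (m A γs : ℝ) (t : ℝ) (x v : Phase d) : ℝ :=
  (max ((1 - m) / m *
      (((1 - A) * t) ^ (2 * (1 - m) / (m - (1 - 1 / (d : ℝ)))) * γs
        + (1 + A) / (2 * (1 - A) * t) *
          (‖v - ((1 - A) * t)⁻¹ • x‖ ^ 2 + A * ‖((1 - A) * t)⁻¹ • x‖ ^ 2))) 0)
    ^ (1 / (m - 1))

set_option maxHeartbeats 1000000

lemma hasFDerivAt_quad {d : ℕ} (C b e : ℝ) (x w : Phase d) :
    HasFDerivAt (fun y : Phase d => C + b * ⟪y, y⟫ + e * ⟪x, y⟫)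
      ((2 * b) • innerSL ℝ w + e • innerSL ℝ x) w := by
  have h1 : HasFDerivAt (fun y : Phase d => ⟪y, y⟫)
      ((fderivInnerCLM ℝ (w, w)).comp
        ((ContinuousLinearMap.id ℝ (Phase d)).prod (ContinuousLinearMap.id ℝ (Phase d)))) w :=
    (hasFDerivAt_id w).inner ℝ (hasFDerivAt_id w)
  have h2 : HasFDerivAt (fun y : Phase d => ⟪x, y⟫) (innerSL ℝ x) w :=
    (innerSL ℝ x).hasFDerivAt
  have h := ((h1.const_mul b).const_add C).add (h2.const_mul e)
  refine h.congr_fderiv ?_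
  ext h'
  simp only [ContinuousLinearMap.add_apply, ContinuousLinearMap.smul_apply,
    ContinuousLinearMap.comp_apply, ContinuousLinearMap.prod_apply, ContinuousLinearMap.id_apply,
    fderivInnerCLM_apply, innerSL_apply_apply, smul_eq_mul]
  rw [real_inner_comm h' w]
  ring

lemma gradient_quad {d : ℕ} (C b e : ℝ) (x v : Phase d) :
    gradient (fun y : Phase d => C + b * ⟪y, y⟫ + e * ⟪x, y⟫) v = (2 * b) • v + e • x := by
  apply HasGradientAt.gradient
  rw [hasGradientAt_iff_hasFDerivAt]
  refine (hasFDerivAt_quad C b e x v).congr_fderiv ?_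
  ext h
  simp [InnerProductSpace.toDual_apply_apply, inner_add_left, real_inner_smul_left]

lemma lapv_quad {d : ℕ} (C b e : ℝ) (x v : Phase d) :
    lapv d (fun y : Phase d => C + b * ⟪y, y⟫ + e * ⟪x, y⟫) v = 2 * d * b := by
  unfold lapv
  have key : ∀ i : Fin d,
      (fun w : Phase d => fderiv ℝ (fun y : Phase d => C + b * ⟪y, y⟫ + e * ⟪x, y⟫) w
        (EuclideanSpace.single i 1))
      = fun w : Phase d => 2 * b * ⟪EuclideanSpace.single i (1:ℝ), w⟫
          + e * ⟪x, EuclideanSpace.single i 1⟫ := by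
    intro i
    funext w
    rw [(hasFDerivAt_quad C b e x w).fderiv]
    simp [real_inner_comm]
  have step : ∀ i : Fin d,
      fderiv ℝ (fun w : Phase d => fderiv ℝ (fun y : Phase d => C + b * ⟪y, y⟫ + e * ⟪x, y⟫) w
        (EuclideanSpace.single i 1)) v (EuclideanSpace.single i 1) = 2 * b := by
    intro i
    rw [key i]
    have h2 : HasFDerivAt
        (fun w : Phase d => 2 * b * ⟪EuclideanSpace.single i (1:ℝ), w⟫
          + e * ⟪x, EuclideanSpace.single i 1⟫)
        ((2 * b) • innerSL ℝ (EuclideanSpace.single i (1:ℝ))) v := by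
      simpa using
        (((innerSL ℝ (EuclideanSpace.single i (1:ℝ))).hasFDerivAt (x := v)).const_mul (2*b)).add_const
          (e * ⟪x, EuclideanSpace.single i 1⟫)
    rw [h2.fderiv]
    simp [EuclideanSpace.inner_single_left]
  rw [Finset.sum_congr rfl (fun i _ => step i)]
  simp [Finset.sum_const]
  ring


lemma norm_smul_sq {d : ℕ} (x : Phase d) (r : ℝ) :
    ‖r • x‖ ^ 2 = r ^ 2 * ⟪x, x⟫ := by
  rw [norm_smul, mul_pow, Real.norm_eq_abs, sq_abs, real_inner_self_eq_norm_sq]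

lemma expand_norm {d : ℕ} (v x : Phase d) (r : ℝ) :
    ‖v - r • x‖ ^ 2 = ⟪v, v⟫ - 2 * r * ⟪x, v⟫ + r ^ 2 * ⟪x, x⟫ := by
  rw [norm_sub_sq_real, real_inner_smul_right, norm_smul_sq, ← real_inner_self_eq_norm_sq,
    real_inner_comm x v]
  ring

/-- the self-similar pressure `P_⋆` solves the pressure equation
`∂_t P = (1−m) P Δ_v P − |∇_v P|² − v·∇_x P` pointwise on `(0,∞) × ℝ^d × ℝ^d`. -/
theorem pressure_equation (d : ℕ) (hd : 1 ≤ d) (m : ℝ)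
    (hm : m ∈ Ioo (1 - 1 / (d : ℝ)) 1 ∪ Ioo 1 (1 + 1 / (d : ℝ)))
    (A : ℝ) (hA : A = (1 + (d : ℝ) - (d : ℝ) * m) / (3 - (d : ℝ) + (d : ℝ) * m))
    (c : ℝ) (P : ℝ → Phase d → Phase d → ℝ)
    (hP : P = fun t x v =>
      c * ((1 - A) * t) ^ (2 * (1 - m) / (m - (1 - 1 / (d : ℝ))))
        + (1 + A) / (2 * (1 - A) * t) *
            (‖v - ((1 - A) * t)⁻¹ • x‖ ^ 2 + A * ‖((1 - A) * t)⁻¹ • x‖ ^ 2)) :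
    ∀ t : ℝ, 0 < t → ∀ x v : Phase d,
      deriv (fun s => P s x v) t
        = (1 - m) * P t x v * lapv d (fun w => P t x w) v
          - ‖gradient (fun w => P t x w) v‖ ^ 2
          - fderiv ℝ (fun y => P t y v) x v := by
  intro t ht x v
  have hd0 : (0:ℝ) < (d:ℝ) := by exact_mod_cast Nat.lt_of_lt_of_le Nat.zero_lt_one hd
  have hdiv : (0:ℝ) < 1 / (d:ℝ) := by positivity
  have hmlow : 1 - 1 / (d:ℝ) < m := by
    rcases hm with h | h
    · exact h.1
    · linarith [h.1]
  have hdm : 0 < (d:ℝ) * m - (d:ℝ) + 1 := by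
    have h := mul_lt_mul_of_pos_left hmlow hd0
    have hdd : (d:ℝ) * (1 / (d:ℝ)) = 1 := by field_simp
    nlinarith
  have hD : 0 < 3 - (d:ℝ) + (d:ℝ) * m := by nlinarith
  have hmne : m - (1 - 1 / (d:ℝ)) ≠ 0 := (by linarith : (0:ℝ) < m - (1 - 1/(d:ℝ))).ne'
  have h1A : 0 < 1 - A := by
    have hA1 : A < 1 := by
      rw [hA, div_lt_one hD]; linarith
    linarith
  have h1A' : (1:ℝ) - A ≠ 0 := h1A.ne'
  have htne : t ≠ 0 := ht.ne'
  have hτ : 0 < (1 - A) * t := mul_pos h1A ht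
  have hτne : (1 - A) * t ≠ 0 := hτ.ne'
  obtain ⟨g, hgd⟩ : ∃ g : ℝ, g = (1 - A)⁻¹ := ⟨_, rfl⟩
  obtain ⟨u, hu⟩ : ∃ u : ℝ, u = t⁻¹ := ⟨_, rfl⟩
  have hg : (1 - A) * g = 1 := by rw [hgd]; field_simp
  have hut : t * u = 1 := by rw [hu]; field_simp
  have hAD : A * (3 - (d:ℝ) + (d:ℝ) * m) = 1 + (d:ℝ) - (d:ℝ) * m := by
    rw [hA]; field_simp
  have hdd : (d:ℝ) * (1 / (d:ℝ)) = 1 := by field_simp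
  have hkey2 : ((d:ℝ) * (1 - m) * (1 + A)) * (3 - (d:ℝ) + (d:ℝ) * m)
      = (3 * A - 1) * (3 - (d:ℝ) + (d:ℝ) * m) := by
    linear_combination ((d:ℝ) * (1 - m) - 3) * hAD
  have hkey := mul_right_cancel₀ hD.ne' hkey2
  have haM : (2 * (1 - m) / (m - (1 - 1 / (d:ℝ)))) * (m - (1 - 1 / (d:ℝ)))
      = 2 * (1 - m) := div_mul_cancel₀ _ hmne
  have ha2 : ((2 * (1 - m) / (m - (1 - 1 / (d:ℝ)))) * (1 - A))
        * ((m - (1 - 1 / (d:ℝ))) * (3 - (d:ℝ) + (d:ℝ) * m))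
      = ((d:ℝ) * (1 - m) * (1 + A)) * ((m - (1 - 1 / (d:ℝ))) * (3 - (d:ℝ) + (d:ℝ) * m)) := by
    linear_combination ((1 - A) * (3 - (d:ℝ) + (d:ℝ) * m)) * haM
      + (-2 * (1 - m) - (d:ℝ) * (1 - m) * (m - (1 - 1 / (d:ℝ)))) * hAD
      + (-4 * (1 - m)) * hdd
  have hα := mul_right_cancel₀ (mul_ne_zero hmne hD.ne') ha2
  -- expansion of the slice in the velocity variable
  have hfv : (fun w => P t x w)
      = fun w : Phase d => ((c * ((1 - A) * t) ^ (2 * (1 - m) / (m - (1 - 1 / (d : ℝ)))) + ((1 + A) ^ 2 * g ^ 3 * u ^ 3 / 2) * ⟪x, x⟫))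
          + ((1 + A) * g * u / 2) * ⟪w, w⟫ + (-(1 + A) * g ^ 2 * u ^ 2) * ⟪x, w⟫ := by
    funext w
    simp only [hP]
    rw [expand_norm w x (((1 - A) * t)⁻¹), norm_smul_sq x (((1 - A) * t)⁻¹), hgd, hu]
    field_simp
    ring
  -- expansion of the slice in the position variable
  have hfx : (fun y => P t y v)
      = fun y : Phase d => ((c * ((1 - A) * t) ^ (2 * (1 - m) / (m - (1 - 1 / (d : ℝ)))) + ((1 + A) * g * u / 2) * ⟪v, v⟫))
          + ((1 + A) ^ 2 * g ^ 3 * u ^ 3 / 2) * ⟪y, y⟫ + (-(1 + A) * g ^ 2 * u ^ 2) * ⟪v, y⟫ := by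
    funext y
    simp only [hP]
    rw [expand_norm v y (((1 - A) * t)⁻¹), norm_smul_sq y (((1 - A) * t)⁻¹),
      real_inner_comm y v, hgd, hu]
    field_simp
    ring
  have hPv : P t x v = c * ((1 - A) * t) ^ (2 * (1 - m) / (m - (1 - 1 / (d : ℝ)))) + ((1 + A) * g * u / 2) * ⟪v, v⟫ + (-(1 + A) * g ^ 2 * u ^ 2) * ⟪x, v⟫ + ((1 + A) ^ 2 * g ^ 3 * u ^ 3 / 2) * ⟪x, x⟫ := by
    simp only [hP]
    rw [expand_norm v x (((1 - A) * t)⁻¹), norm_smul_sq x (((1 - A) * t)⁻¹), hgd, hu]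
    field_simp
    ring
  -- the time slice, in a neighbourhood of t
  have hev : (fun s => P s x v) =ᶠ[nhds t]
      (fun s : ℝ => c * ((1 - A) * s) ^ (2 * (1 - m) / (m - (1 - 1 / (d : ℝ)))) + ((1 + A) * g / 2) * s⁻¹ * ⟪v, v⟫
        + (-(1 + A) * g ^ 2) * s⁻¹ ^ 2 * ⟪x, v⟫ + ((1 + A) ^ 2 * g ^ 3 / 2) * s⁻¹ ^ 3 * ⟪x, x⟫) := by
    filter_upwards [(isOpen_Ioi (a := (0:ℝ))).mem_nhds (Set.mem_Ioi.mpr ht)] with s hs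
    have hs0 : s ≠ 0 := (Set.mem_Ioi.mp hs).ne'
    simp only [hP]
    rw [expand_norm v x (((1 - A) * s)⁻¹), norm_smul_sq x (((1 - A) * s)⁻¹), hgd]
    field_simp
    ring
  have h1 : HasDerivAt (fun s : ℝ => ((1 - A) * s) ^ (2 * (1 - m) / (m - (1 - 1 / (d : ℝ)))))
      ((2 * (1 - m) / (m - (1 - 1 / (d : ℝ)))) * ((1 - A) * t) ^ ((2 * (1 - m) / (m - (1 - 1 / (d : ℝ)))) - 1) * (1 - A)) t := by
    have ha := Real.hasDerivAt_rpow_const (x := (1 - A) * t) (p := (2 * (1 - m) / (m - (1 - 1 / (d : ℝ))))) (Or.inl hτne)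
    have hb : HasDerivAt (fun s : ℝ => (1 - A) * s) (1 - A) t := by
      simpa using (hasDerivAt_id t).const_mul (1 - A)
    exact ha.comp t hb
  have hDF : HasDerivAt
      (fun s : ℝ => c * ((1 - A) * s) ^ (2 * (1 - m) / (m - (1 - 1 / (d : ℝ)))) + ((1 + A) * g / 2) * s⁻¹ * ⟪v, v⟫
        + (-(1 + A) * g ^ 2) * s⁻¹ ^ 2 * ⟪x, v⟫ + ((1 + A) ^ 2 * g ^ 3 / 2) * s⁻¹ ^ 3 * ⟪x, x⟫)
      (c * ((2 * (1 - m) / (m - (1 - 1 / (d : ℝ)))) * ((1 - A) * t) ^ ((2 * (1 - m) / (m - (1 - 1 / (d : ℝ)))) - 1) * (1 - A))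
        + ((1 + A) * g / 2) * -(u ^ 2) * ⟪v, v⟫
        + (-(1 + A) * g ^ 2) * (2 * u * -(u ^ 2)) * ⟪x, v⟫
        + ((1 + A) ^ 2 * g ^ 3 / 2) * (3 * u ^ 2 * -(u ^ 2)) * ⟪x, x⟫) t := by
    have comb := (((h1.const_mul c).add
        (((hasDerivAt_inv htne).const_mul ((1 + A) * g / 2)).mul_const ⟪v, v⟫)).add
        ((((hasDerivAt_inv htne).pow 2).const_mul (-(1 + A) * g ^ 2)).mul_const ⟪x, v⟫)).add
        ((((hasDerivAt_inv htne).pow 3).const_mul ((1 + A) ^ 2 * g ^ 3 / 2)).mul_const ⟪x, x⟫)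
    refine comb.congr_deriv ?_
    rw [hu]
    push_cast
    ring
  have hderiv : deriv (fun s => P s x v) t
      = c * ((2 * (1 - m) / (m - (1 - 1 / (d : ℝ)))) * ((1 - A) * t) ^ ((2 * (1 - m) / (m - (1 - 1 / (d : ℝ)))) - 1) * (1 - A))
        + ((1 + A) * g / 2) * -(u ^ 2) * ⟪v, v⟫
        + (-(1 + A) * g ^ 2) * (2 * u * -(u ^ 2)) * ⟪x, v⟫
        + ((1 + A) ^ 2 * g ^ 3 / 2) * (3 * u ^ 2 * -(u ^ 2)) * ⟪x, x⟫ := by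
    rw [hev.deriv_eq]
    exact hDF.deriv
  have hfd : fderiv ℝ (fun y : Phase d => ((c * ((1 - A) * t) ^ (2 * (1 - m) / (m - (1 - 1 / (d : ℝ)))) + ((1 + A) * g * u / 2) * ⟪v, v⟫))
          + ((1 + A) ^ 2 * g ^ 3 * u ^ 3 / 2) * ⟪y, y⟫ + (-(1 + A) * g ^ 2 * u ^ 2) * ⟪v, y⟫) x
      = (2 * ((1 + A) ^ 2 * g ^ 3 * u ^ 3 / 2)) • innerSL ℝ x + (-(1 + A) * g ^ 2 * u ^ 2) • innerSL ℝ v :=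
    (hasFDerivAt_quad _ ((1 + A) ^ 2 * g ^ 3 * u ^ 3 / 2) (-(1 + A) * g ^ 2 * u ^ 2) v x).fderiv
  have hng : ‖(2 * ((1 + A) * g * u / 2)) • v + (-(1 + A) * g ^ 2 * u ^ 2) • x‖ ^ 2
      = 4 * ((1 + A) * g * u / 2) ^ 2 * ⟪v, v⟫ + 4 * ((1 + A) * g * u / 2) * (-(1 + A) * g ^ 2 * u ^ 2) * ⟪x, v⟫ + (-(1 + A) * g ^ 2 * u ^ 2) ^ 2 * ⟪x, x⟫ := by
    rw [← real_inner_self_eq_norm_sq]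
    simp only [inner_add_left, inner_add_right, real_inner_smul_left, real_inner_smul_right]
    rw [real_inner_comm v x]
    ring
  rw [hderiv, hfv, hfx, hPv, lapv_quad, gradient_quad, hng, hfd]
  simp only [ContinuousLinearMap.add_apply, ContinuousLinearMap.smul_apply, innerSL_apply_apply,
    smul_eq_mul]
  have hRR : ((1 - A) * t) ^ (2 * (1 - m) / (m - (1 - 1 / (d : ℝ)))) = (((1 - A) * t) ^ ((2 * (1 - m) / (m - (1 - 1 / (d : ℝ)))) - 1)) * ((1 - A) * t) := by
    rw [← Real.rpow_add_one hτne ((2 * (1 - m) / (m - (1 - 1 / (d : ℝ)))) - 1), sub_add_cancel]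
  rw [hRR]
  have H1 : c * ((2 * (1 - m) / (m - (1 - 1 / (d : ℝ)))) * (((1 - A) * t) ^ ((2 * (1 - m) / (m - (1 - 1 / (d : ℝ)))) - 1)) * (1 - A))
      = (1 - m) * (c * ((((1 - A) * t) ^ ((2 * (1 - m) / (m - (1 - 1 / (d : ℝ)))) - 1)) * ((1 - A) * t))) * (2 * (d:ℝ) * ((1 + A) * g * u / 2)) := by
    linear_combination (c * (((1 - A) * t) ^ ((2 * (1 - m) / (m - (1 - 1 / (d : ℝ)))) - 1))) * hα
      + (-(c * (((1 - A) * t) ^ ((2 * (1 - m) / (m - (1 - 1 / (d : ℝ)))) - 1)) * (d:ℝ) * (1 - m) * (1 + A) * t * u)) * hg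
      + (-(c * (((1 - A) * t) ^ ((2 * (1 - m) / (m - (1 - 1 / (d : ℝ)))) - 1)) * (d:ℝ) * (1 - m) * (1 + A))) * hut
  have H2 : ((1 + A) * g / 2) * -(u ^ 2)
      = (1 - m) * ((1 + A) * g * u / 2) * (2 * (d:ℝ) * ((1 + A) * g * u / 2)) - 4 * ((1 + A) * g * u / 2) ^ 2 - (-(1 + A) * g ^ 2 * u ^ 2) := by
    linear_combination (-(1 + A) * g ^ 2 * u ^ 2 / 2) * hkey + ((1 + A) * g * u ^ 2 / 2) * hg
  have H3 : (-(1 + A) * g ^ 2) * (2 * u * -(u ^ 2))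
      = (1 - m) * (-(1 + A) * g ^ 2 * u ^ 2) * (2 * (d:ℝ) * ((1 + A) * g * u / 2)) - 4 * ((1 + A) * g * u / 2) * (-(1 + A) * g ^ 2 * u ^ 2) - 2 * ((1 + A) ^ 2 * g ^ 3 * u ^ 3 / 2) := by
    linear_combination ((1 + A) * g ^ 3 * u ^ 3) * hkey + (-2 * (1 + A) * g ^ 2 * u ^ 3) * hg
  have H4 : ((1 + A) ^ 2 * g ^ 3 / 2) * (3 * u ^ 2 * -(u ^ 2))
      = (1 - m) * ((1 + A) ^ 2 * g ^ 3 * u ^ 3 / 2) * (2 * (d:ℝ) * ((1 + A) * g * u / 2)) - (-(1 + A) * g ^ 2 * u ^ 2) ^ 2 := by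
    linear_combination (-(1 + A) ^ 2 * g ^ 4 * u ^ 4 / 2) * hkey
      + (3 * (1 + A) ^ 2 * g ^ 3 * u ^ 4 / 2) * hg
  linear_combination H1 + ⟪v, v⟫ * H2 + ⟪x, v⟫ * H3 + ⟪x, x⟫ * H4
end
end

section
/- Let d ≥ 1 be an integer, m ∈ (m₁,1)∪(1,m₂), R₀ > 0, and R(t) := ( R₀^{1−A} + (1−A)t )^{1/(1−A)} for t ≥ 0. Suppose g is a positive function on (log R₀, ∞)×ℝ^d×ℝ^d, of class C¹ in (t,x) and C² in v, that satisfies the rescaled equation ∂_t g + v·∇_x g − A x·∇_v g = Δ_v(g^m) + (1+A)∇_v·(v g) pointwise. Then the function f(t,x,v) := R(t)^{−d(1+A)} · g( log R(t), x/R(t), v/R(t)^A − x/R(t) ) satisfies the kinetic equation ∂_t f + v·∇_x f = Δ_v(f^m) pointwise on (0,∞)×ℝ^d×ℝ^d. -/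
open MeasureTheory Real Filter Set
open scoped RealInnerProductSpace

noncomputable section

namespace SSCV

variable {d : ℕ}

lemma lapv_scale (h : Phase d → ℝ) (k a : ℝ) (b v : Phase d)
    (hdiff : Differentiable ℝ h)
    (hdiff2 : ∀ i : Fin d, DifferentiableAt ℝ
      (fun z => fderiv ℝ h z (EuclideanSpace.single i 1)) (a • v + b)) :
    lapv d (fun u => k * h (a • u + b)) v = k * a ^ 2 * lapv d h (a • v + b) := by
  have hT : ∀ u : Phase d, HasFDerivAt (fun u' : Phase d => a • u' + b)
      (a • ContinuousLinearMap.id ℝ (Phase d)) u := fun u => by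
    simpa using ((a • ContinuousLinearMap.id ℝ (Phase d)).hasFDerivAt (x := u)).add_const b
  have hinner : ∀ (u : Phase d) (i : Fin d),
      fderiv ℝ (fun u' => k * h (a • u' + b)) u (EuclideanSpace.single i 1)
        = (k * a) * fderiv ℝ h (a • u + b) (EuclideanSpace.single i 1) := by
    intro u i
    have h1 : HasFDerivAt (fun u' : Phase d => h (a • u' + b))
        ((fderiv ℝ h (a • u + b)).comp (a • ContinuousLinearMap.id ℝ (Phase d))) u :=
      (hdiff (a • u + b)).hasFDerivAt.comp u (hT u)
    rw [(h1.const_mul k).fderiv]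
    simp [ContinuousLinearMap.comp_apply, _root_.map_smul]
    ring
  unfold lapv
  rw [Finset.mul_sum]
  refine Finset.sum_congr rfl fun i _ => ?_
  have hfun : (fun u => fderiv ℝ (fun u' => k * h (a • u' + b)) u (EuclideanSpace.single i 1))
      = fun u => (k * a) * fderiv ℝ h (a • u + b) (EuclideanSpace.single i 1) :=
    funext fun u => hinner u i
  rw [hfun]
  have h3 : HasFDerivAt (fun u : Phase d =>
        fderiv ℝ h (a • u + b) (EuclideanSpace.single i 1))
      (((fderiv ℝ (fun z => fderiv ℝ h z (EuclideanSpace.single i 1)) (a • v + b)).comp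
        (a • ContinuousLinearMap.id ℝ (Phase d)))) v :=
    by have := (hdiff2 i).hasFDerivAt.comp v (hT v); exact this
  rw [((h3.const_mul (k * a)).fderiv)]
  simp [ContinuousLinearMap.comp_apply, _root_.map_smul]
  ring

lemma partial_t (g : ℝ → Phase d → Phase d → ℝ) (s : ℝ) (y w : Phase d)
    (hG : DifferentiableAt ℝ (fun p : ℝ × Phase d × Phase d => g p.1 p.2.1 p.2.2) (s, y, w)) :
    deriv (fun σ => g σ y w) s
      = fderiv ℝ (fun p : ℝ × Phase d × Phase d => g p.1 p.2.1 p.2.2) (s, y, w) (1, 0, 0) := by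
  have hcurve : HasDerivAt (fun σ : ℝ => ((σ, y, w) : ℝ × Phase d × Phase d))
      ((1 : ℝ), (0 : Phase d), (0 : Phase d)) s := by
    exact HasDerivAt.prodMk (hasDerivAt_id s) (hasDerivAt_const s (y, w))
  exact (hG.hasFDerivAt.comp_hasDerivAt s hcurve).deriv

lemma partial_x (g : ℝ → Phase d → Phase d → ℝ) (s : ℝ) (y w u : Phase d)
    (hG : DifferentiableAt ℝ (fun p : ℝ × Phase d × Phase d => g p.1 p.2.1 p.2.2) (s, y, w)) :
    fderiv ℝ (fun z => g s z w) y u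
      = fderiv ℝ (fun p : ℝ × Phase d × Phase d => g p.1 p.2.1 p.2.2) (s, y, w) (0, u, 0) := by
  have hAff : HasFDerivAt (fun z : Phase d => ((s, z, w) : ℝ × Phase d × Phase d))
      ((0 : Phase d →L[ℝ] ℝ).prod ((ContinuousLinearMap.id ℝ (Phase d)).prod 0)) y :=
    HasFDerivAt.prodMk (hasFDerivAt_const s y) (HasFDerivAt.prodMk (hasFDerivAt_id y) (hasFDerivAt_const w y))
  have hc : HasFDerivAt (fun z : Phase d => g s z w)
      ((fderiv ℝ (fun p : ℝ × Phase d × Phase d => g p.1 p.2.1 p.2.2) (s, y, w)).comp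
        ((0 : Phase d →L[ℝ] ℝ).prod ((ContinuousLinearMap.id ℝ (Phase d)).prod 0))) y :=
    by have := hG.hasFDerivAt.comp y hAff; exact this
  rw [hc.fderiv]
  simp

lemma partial_v (g : ℝ → Phase d → Phase d → ℝ) (s : ℝ) (y w : Phase d) (u : Phase d)
    (hG : DifferentiableAt ℝ (fun p : ℝ × Phase d × Phase d => g p.1 p.2.1 p.2.2) (s, y, w)) :
    fderiv ℝ (fun z => g s y z) w u
      = fderiv ℝ (fun p : ℝ × Phase d × Phase d => g p.1 p.2.1 p.2.2) (s, y, w) (0, 0, u) := by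
  have hAff : HasFDerivAt (fun z : Phase d => ((s, y, z) : ℝ × Phase d × Phase d))
      ((0 : Phase d →L[ℝ] ℝ).prod ((0 : Phase d →L[ℝ] Phase d).prod
        (ContinuousLinearMap.id ℝ (Phase d)))) w :=
    HasFDerivAt.prodMk (hasFDerivAt_const s w) (HasFDerivAt.prodMk (hasFDerivAt_const y w) (hasFDerivAt_id w))
  have hc : HasFDerivAt (fun z : Phase d => g s y z)
      ((fderiv ℝ (fun p : ℝ × Phase d × Phase d => g p.1 p.2.1 p.2.2) (s, y, w)).comp
        ((0 : Phase d →L[ℝ] ℝ).prod ((0 : Phase d →L[ℝ] Phase d).prod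
          (ContinuousLinearMap.id ℝ (Phase d))))) w :=
    by have := hG.hasFDerivAt.comp w hAff; exact this
  rw [hc.fderiv]
  simp

end SSCV

set_option maxHeartbeats 2000000

/-- the self-similar change of variables transforms classical solutions of
the rescaled equation (E') into classical solutions of the kinetic equation (E). -/
theorem selfsimilar_change_of_variables (d : ℕ) (hd : 1 ≤ d) (m : ℝ)
    (hm : m ∈ Ioo (1 - 1 / (d : ℝ)) 1 ∪ Ioo 1 (1 + 1 / (d : ℝ)))
    (A : ℝ) (hA : A = (1 + (d : ℝ) - (d : ℝ) * m) / (3 - (d : ℝ) + (d : ℝ) * m))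
    (R₀ : ℝ) (hR₀ : 0 < R₀) (R : ℝ → ℝ)
    (hR : R = fun t => (R₀ ^ (1 - A) + (1 - A) * t) ^ (1 / (1 - A)))
    (g : ℝ → Phase d → Phase d → ℝ)
    (hgpos : ∀ t x v, Real.log R₀ < t → 0 < g t x v)
    -- `g` is of class `C¹` in `(t,x)` (jointly with `v`) on the domain:
    (hg1 : ContDiffOn ℝ 1 (fun p : ℝ × Phase d × Phase d => g p.1 p.2.1 p.2.2)
      {p : ℝ × Phase d × Phase d | Real.log R₀ < p.1})
    -- and of class `C²` in `v`: its `v`-differential is again `C¹` on the domain: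
    (hg2 : ContDiffOn ℝ 1
      (fun p : ℝ × Phase d × Phase d => fderiv ℝ (fun w => g p.1 p.2.1 w) p.2.2)
      {p : ℝ × Phase d × Phase d | Real.log R₀ < p.1})
    -- `g` satisfies (E') pointwise on `(log R₀, ∞) × ℝ^d × ℝ^d`:
    (hgeq : ∀ t x v, Real.log R₀ < t →
      deriv (fun s => g s x v) t + fderiv ℝ (fun y => g t y v) x v
          - A * fderiv ℝ (fun w => g t x w) v x
        = lapv d (fun w => g t x w ^ m) v
          + (1 + A) * ((d : ℝ) * g t x v + fderiv ℝ (fun w => g t x w) v v))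
    (f : ℝ → Phase d → Phase d → ℝ)
    (hf : f = fun t x v =>
      R t ^ (-(d : ℝ) * (1 + A)) *
        g (Real.log (R t)) ((R t)⁻¹ • x) ((R t ^ A)⁻¹ • v - (R t)⁻¹ • x)) :
    ∀ t x v, 0 < t →
      deriv (fun s => f s x v) t + fderiv ℝ (fun y => f t y v) x v
        = lapv d (fun w => f t x w ^ m) v := by
  subst hf
  intro t x v ht
  beta_reduce
  -- scalar facts
  have hd1 : (1:ℝ) ≤ (d:ℝ) := by exact_mod_cast hd
  have hdinv : (0:ℝ) < 1/(d:ℝ) := by positivity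
  have hm1 : 1 - 1/(d:ℝ) < m := by
    rcases hm with h | h
    · exact h.1
    · linarith [h.1]
  have hm2 : m < 1 + 1/(d:ℝ) := by
    rcases hm with h | h
    · linarith [h.2]
    · exact h.2
  have hdpos : (0:ℝ) < (d:ℝ) := by linarith
  have hdd : (d:ℝ) * (1/(d:ℝ)) = 1 := by field_simp
  have hdm1 : (d:ℝ) - 1 < (d:ℝ)*m := by nlinarith [mul_lt_mul_of_pos_left hm1 hdpos]
  have hdm2 : (d:ℝ)*m < (d:ℝ) + 1 := by nlinarith [mul_lt_mul_of_pos_left hm2 hdpos]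
  have hden : (0:ℝ) < 3 - (d:ℝ) + (d:ℝ)*m := by linarith
  have hAlt : A < 1 := by rw [hA, div_lt_one hden]; linarith
  have h1A : (0:ℝ) < 1 - A := by linarith
  have hAkey : A * (3 - (d:ℝ) + (d:ℝ)*m) = 1 + (d:ℝ) - (d:ℝ)*m := by
    rw [hA]; field_simp
  -- facts about R
  have hbt : (0:ℝ) < R₀ ^ (1-A) + (1-A)*t := by positivity
  have hRt : 0 < R t := by simp only [hR]; positivity
  have hRgt : R₀ < R t := by
    simp only [hR]
    have h1 : R₀ = (R₀ ^ (1-A)) ^ (1/(1-A)) := by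
      rw [← Real.rpow_mul hR₀.le, mul_one_div, div_self h1A.ne', Real.rpow_one]
    nth_rewrite 1 [h1]
    apply Real.rpow_lt_rpow (by positivity) (by nlinarith) (by positivity)
  have hRder : HasDerivAt R (R t ^ A) t := by
    have hbder : HasDerivAt (fun τ : ℝ => R₀ ^ (1-A) + (1-A)*τ) (1-A) t := by
      simpa using ((hasDerivAt_id t).const_mul (1-A)).const_add (R₀ ^ (1-A))
    have h0 := hbder.rpow_const (p := 1/(1-A)) (Or.inl hbt.ne')
    have hval : (1-A) * (1/(1-A)) * (R₀ ^ (1-A) + (1-A)*t) ^ (1/(1-A) - 1)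
        = ((R₀ ^ (1-A) + (1-A)*t) ^ (1/(1-A))) ^ A := by
      rw [mul_one_div, div_self h1A.ne', one_mul, ← Real.rpow_mul hbt.le]
      congr 1
      field_simp
      ring
    simp only [hR]
    rw [← hval]
    exact h0
  have hlogs : Real.log R₀ < Real.log (R t) := Real.log_lt_log hR₀ hRgt
  have hRApos : 0 < R t ^ A := Real.rpow_pos_of_pos hRt A
  -- differentiability of G and its v-derivative
  have hUopen : IsOpen {p : ℝ × Phase d × Phase d | Real.log R₀ < p.1} :=
    isOpen_lt continuous_const continuous_fst
  have hGdiff : ∀ p : ℝ × Phase d × Phase d, Real.log R₀ < p.1 →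
      DifferentiableAt ℝ (fun p : ℝ × Phase d × Phase d => g p.1 p.2.1 p.2.2) p :=
    fun p hp => (hg1.contDiffAt (hUopen.mem_nhds hp)).differentiableAt one_ne_zero
  have hDdiff : ∀ p : ℝ × Phase d × Phase d, Real.log R₀ < p.1 →
      DifferentiableAt ℝ (fun p : ℝ × Phase d × Phase d =>
        fderiv ℝ (fun w => g p.1 p.2.1 w) p.2.2) p :=
    fun p hp => (hg2.contDiffAt (hUopen.mem_nhds hp)).differentiableAt one_ne_zero
  have hGq : DifferentiableAt ℝ (fun p : ℝ × Phase d × Phase d => g p.1 p.2.1 p.2.2)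
      (Real.log (R t), (R t)⁻¹ • x, (R t ^ A)⁻¹ • v - (R t)⁻¹ • x) := hGdiff _ hlogs
    -- Term (1): time derivative
  have hsig : HasDerivAt (fun τ => Real.log (R τ)) (R t ^ A / R t) t := hRder.log hRt.ne'
  have hY : HasDerivAt (fun τ => (R τ)⁻¹ • x) ((-(R t ^ A) / R t ^ 2) • x) t := (hRder.inv hRt.ne').smul_const x
  have hRA : HasDerivAt (fun τ => R τ ^ A) (R t ^ A * A * R t ^ (A - 1)) t := hRder.rpow_const (Or.inl hRt.ne')
  have hV : HasDerivAt (fun τ => (R τ ^ A)⁻¹ • v) ((-(R t ^ A * A * R t ^ (A - 1)) / (R t ^ A) ^ 2) • v) t :=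
    (hRA.inv hRApos.ne').smul_const v
  have hP : HasDerivAt (fun τ => ((Real.log (R τ), (R τ)⁻¹ • x, (R τ ^ A)⁻¹ • v - (R τ)⁻¹ • x) : ℝ × Phase d × Phase d))
      (((R t ^ A / R t, (-(R t ^ A) / R t ^ 2) • x, (-(R t ^ A * A * R t ^ (A - 1)) / (R t ^ A) ^ 2) • v - (-(R t ^ A) / R t ^ 2) • x)) : ℝ × Phase d × Phase d) t := HasDerivAt.prodMk hsig (HasDerivAt.prodMk hY (hV.sub hY))
  have hGP : HasDerivAt (fun τ => g (Real.log (R τ)) ((R τ)⁻¹ • x) ((R τ ^ A)⁻¹ • v - (R τ)⁻¹ • x))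
      (fderiv ℝ (fun p : ℝ × Phase d × Phase d => g p.1 p.2.1 p.2.2) (Real.log (R t), (R t)⁻¹ • x, (R t ^ A)⁻¹ • v - (R t)⁻¹ • x) ((R t ^ A / R t, (-(R t ^ A) / R t ^ 2) • x, (-(R t ^ A * A * R t ^ (A - 1)) / (R t ^ A) ^ 2) • v - (-(R t ^ A) / R t ^ 2) • x) : ℝ × Phase d × Phase d)) t := by have := hGq.hasFDerivAt.comp_hasDerivAt t hP; exact this
  have hcder : HasDerivAt (fun τ => R τ ^ (-(d:ℝ) * (1 + A))) (R t ^ A * (-(d:ℝ) * (1 + A)) * R t ^ ((-(d:ℝ) * (1 + A)) - 1)) t := hRder.rpow_const (Or.inl hRt.ne')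
  have hT1 : deriv (fun τ => R τ ^ (-(d:ℝ) * (1 + A)) * g (Real.log (R τ)) ((R τ)⁻¹ • x) ((R τ ^ A)⁻¹ • v - (R τ)⁻¹ • x)) t
      = R t ^ A * (-(d:ℝ) * (1 + A)) * R t ^ ((-(d:ℝ) * (1 + A)) - 1) * g (Real.log (R t)) ((R t)⁻¹ • x) ((R t ^ A)⁻¹ • v - (R t)⁻¹ • x) + R t ^ (-(d:ℝ) * (1 + A)) * fderiv ℝ (fun p : ℝ × Phase d × Phase d => g p.1 p.2.1 p.2.2) (Real.log (R t), (R t)⁻¹ • x, (R t ^ A)⁻¹ • v - (R t)⁻¹ • x) ((R t ^ A / R t, (-(R t ^ A) / R t ^ 2) • x, (-(R t ^ A * A * R t ^ (A - 1)) / (R t ^ A) ^ 2) • v - (-(R t ^ A) / R t ^ 2) • x) : ℝ × Phase d × Phase d) := (hcder.mul hGP).deriv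
  -- Term (2): x derivative
  have hM : HasFDerivAt (fun z : Phase d => ((Real.log (R t), (R t)⁻¹ • z, (R t ^ A)⁻¹ • v - (R t)⁻¹ • z) : ℝ × Phase d × Phase d))
      ((0 : Phase d →L[ℝ] ℝ).prod (((R t)⁻¹ • ContinuousLinearMap.id ℝ (Phase d)).prod
        (0 - (R t)⁻¹ • ContinuousLinearMap.id ℝ (Phase d)))) x :=
    HasFDerivAt.prodMk (hasFDerivAt_const _ _) (HasFDerivAt.prodMk (((R t)⁻¹ • ContinuousLinearMap.id ℝ (Phase d)).hasFDerivAt)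
      (HasFDerivAt.sub (hasFDerivAt_const _ _) (((R t)⁻¹ • ContinuousLinearMap.id ℝ (Phase d)).hasFDerivAt)))
  have hGM : HasFDerivAt (fun z : Phase d => g (Real.log (R t)) ((R t)⁻¹ • z) ((R t ^ A)⁻¹ • v - (R t)⁻¹ • z))
      ((fderiv ℝ (fun p : ℝ × Phase d × Phase d => g p.1 p.2.1 p.2.2) (Real.log (R t), (R t)⁻¹ • x, (R t ^ A)⁻¹ • v - (R t)⁻¹ • x)).comp ((0 : Phase d →L[ℝ] ℝ).prod (((R t)⁻¹ • ContinuousLinearMap.id ℝ (Phase d)).prod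
        (0 - (R t)⁻¹ • ContinuousLinearMap.id ℝ (Phase d))))) x := by have := hGq.hasFDerivAt.comp x hM; exact this
  have hT2 : fderiv ℝ (fun z : Phase d => R t ^ (-(d:ℝ) * (1 + A)) * g (Real.log (R t)) ((R t)⁻¹ • z) ((R t ^ A)⁻¹ • v - (R t)⁻¹ • z)) x v
      = R t ^ (-(d:ℝ) * (1 + A)) * fderiv ℝ (fun p : ℝ × Phase d × Phase d => g p.1 p.2.1 p.2.2) (Real.log (R t), (R t)⁻¹ • x, (R t ^ A)⁻¹ • v - (R t)⁻¹ • x) (((0:ℝ), (R t)⁻¹ • v, -((R t)⁻¹ • v)) : ℝ × Phase d × Phase d) := by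
    rw [(hGM.const_mul (R t ^ (-(d:ℝ) * (1 + A)))).fderiv]
    simp
  -- Term (3): velocity Laplacian
  have hgv : ∀ z : Phase d, DifferentiableAt ℝ (fun z' : Phase d => g (Real.log (R t)) ((R t)⁻¹ • x) z') z := by
    intro z
    have hAff : HasFDerivAt (fun z' : Phase d => (((Real.log (R t)), ((R t)⁻¹ • x), z') : ℝ × Phase d × Phase d))
        ((0 : Phase d →L[ℝ] ℝ).prod ((0 : Phase d →L[ℝ] Phase d).prod
          (ContinuousLinearMap.id ℝ (Phase d)))) z :=
      HasFDerivAt.prodMk (hasFDerivAt_const _ _) (HasFDerivAt.prodMk (hasFDerivAt_const _ _) (hasFDerivAt_id z))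
    have := (hGdiff ((Real.log (R t)), ((R t)⁻¹ • x), z) hlogs).comp z hAff.differentiableAt; exact this
  have hdiffh : Differentiable ℝ (fun z : Phase d => g (Real.log (R t)) ((R t)⁻¹ • x) z ^ m) :=
    fun z => (hgv z).rpow_const (Or.inl (hgpos _ _ _ hlogs).ne')
  have hfd : ∀ z : Phase d, fderiv ℝ (fun z' : Phase d => g (Real.log (R t)) ((R t)⁻¹ • x) z' ^ m) z
      = (m * g (Real.log (R t)) ((R t)⁻¹ • x) z ^ (m-1)) • fderiv ℝ (fun z' : Phase d => g (Real.log (R t)) ((R t)⁻¹ • x) z') z := by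
    intro z
    have h1 : HasDerivAt (fun T : ℝ => T ^ m) (m * g (Real.log (R t)) ((R t)⁻¹ • x) z ^ (m-1)) (g (Real.log (R t)) ((R t)⁻¹ • x) z) :=
      Real.hasDerivAt_rpow_const (Or.inl (hgpos _ _ _ hlogs).ne')
    exact (h1.comp_hasFDerivAt z (hgv z).hasFDerivAt).fderiv
  have hDg : ∀ z : Phase d, DifferentiableAt ℝ
      (fun z' : Phase d => fderiv ℝ (fun u : Phase d => g (Real.log (R t)) ((R t)⁻¹ • x) u) z') z := by
    intro z
    have hAff : HasFDerivAt (fun z' : Phase d => (((Real.log (R t)), ((R t)⁻¹ • x), z') : ℝ × Phase d × Phase d))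
        ((0 : Phase d →L[ℝ] ℝ).prod ((0 : Phase d →L[ℝ] Phase d).prod
          (ContinuousLinearMap.id ℝ (Phase d)))) z :=
      HasFDerivAt.prodMk (hasFDerivAt_const _ _) (HasFDerivAt.prodMk (hasFDerivAt_const _ _) (hasFDerivAt_id z))
    have := (hDdiff ((Real.log (R t)), ((R t)⁻¹ • x), z) hlogs).comp z hAff.differentiableAt; exact this
  have hdiff2 : ∀ i : Fin d, DifferentiableAt ℝ
      (fun z : Phase d => fderiv ℝ (fun z' : Phase d => g (Real.log (R t)) ((R t)⁻¹ • x) z' ^ m) z (EuclideanSpace.single i 1))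
      ((R t ^ A)⁻¹ • v + -((R t)⁻¹ • x)) := by
    intro i
    have heq : (fun z : Phase d => fderiv ℝ (fun z' : Phase d => g (Real.log (R t)) ((R t)⁻¹ • x) z' ^ m) z (EuclideanSpace.single i 1))
        = fun z : Phase d => m * (g (Real.log (R t)) ((R t)⁻¹ • x) z ^ (m-1)
            * fderiv ℝ (fun z' : Phase d => g (Real.log (R t)) ((R t)⁻¹ • x) z') z (EuclideanSpace.single i 1)) := by
      funext z
      rw [hfd z]
      simp [mul_assoc]
    rw [heq]
    have h1 : DifferentiableAt ℝ (fun z : Phase d => g (Real.log (R t)) ((R t)⁻¹ • x) z ^ (m-1)) ((R t ^ A)⁻¹ • v + -((R t)⁻¹ • x)) :=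
      (hgv _).rpow_const (Or.inl (hgpos _ _ _ hlogs).ne')
    have h2 : DifferentiableAt ℝ
        (fun z : Phase d => fderiv ℝ (fun z' : Phase d => g (Real.log (R t)) ((R t)⁻¹ • x) z') z (EuclideanSpace.single i 1)) ((R t ^ A)⁻¹ • v + -((R t)⁻¹ • x)) :=
      (hDg _).clm_apply (differentiableAt_const _)
    exact (h1.mul h2).const_mul m
  have hfun3 : (fun u : Phase d => (R t ^ (-(d:ℝ) * (1 + A)) * g (Real.log (R t)) ((R t)⁻¹ • x) ((R t ^ A)⁻¹ • u - (R t)⁻¹ • x)) ^ m)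
      = fun u : Phase d => (R t ^ (-(d:ℝ) * (1 + A))) ^ m * g (Real.log (R t)) ((R t)⁻¹ • x) ((R t ^ A)⁻¹ • u + -((R t)⁻¹ • x)) ^ m := by
    funext u
    rw [Real.mul_rpow (Real.rpow_pos_of_pos hRt _).le (hgpos _ _ _ hlogs).le, sub_eq_add_neg]
  have hT3' := SSCV.lapv_scale (fun z : Phase d => g (Real.log (R t)) ((R t)⁻¹ • x) z ^ m) ((R t ^ (-(d:ℝ) * (1 + A))) ^ m)
      ((R t ^ A)⁻¹) (-((R t)⁻¹ • x)) v hdiffh hdiff2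
  -- scalar identities
  have hrame : R t ^ (A - 1) = R t ^ A / R t := by rw [Real.rpow_sub hRt, Real.rpow_one]
  have hcm : R t ^ ((-(d:ℝ) * (1 + A)) - 1) = R t ^ (-(d:ℝ) * (1 + A)) / R t := by rw [Real.rpow_sub hRt, Real.rpow_one]
  have hcd : R t ^ A * (-(d:ℝ) * (1 + A)) * R t ^ ((-(d:ℝ) * (1 + A)) - 1) = (-(d:ℝ) * (1 + A)) * (R t ^ (-(d:ℝ) * (1 + A)) * (R t ^ A / R t)) := by rw [hcm]; ring
  have hcoefRHS : (R t ^ (-(d:ℝ) * (1 + A))) ^ m * ((R t ^ A)⁻¹) ^ 2 = R t ^ (-(d:ℝ) * (1 + A)) * (R t ^ A / R t) := by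
    have h1 : (R t ^ (-(d:ℝ) * (1 + A))) ^ m = R t ^ ((-(d:ℝ) * (1 + A)) * m) := (Real.rpow_mul hRt.le _ _).symm
    have h2 : ((R t ^ A)⁻¹ : ℝ) ^ 2 = (R t ^ (A + A))⁻¹ := by
      rw [sq, ← mul_inv, ← Real.rpow_add hRt]
    rw [h1, h2, ← Real.rpow_neg hRt.le, ← hrame, ← Real.rpow_add hRt, ← Real.rpow_add hRt]
    congr 1
    linear_combination (-1 : ℝ) * hAkey
  -- the rescaled equation at the transformed point
  have key := hgeq (Real.log (R t)) ((R t)⁻¹ • x) ((R t ^ A)⁻¹ • v - (R t)⁻¹ • x) hlogs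
  rw [SSCV.partial_t g (Real.log (R t)) ((R t)⁻¹ • x) ((R t ^ A)⁻¹ • v - (R t)⁻¹ • x) hGq,
      SSCV.partial_x g (Real.log (R t)) ((R t)⁻¹ • x) ((R t ^ A)⁻¹ • v - (R t)⁻¹ • x) ((R t ^ A)⁻¹ • v - (R t)⁻¹ • x) hGq,
      SSCV.partial_v g (Real.log (R t)) ((R t)⁻¹ • x) ((R t ^ A)⁻¹ • v - (R t)⁻¹ • x) ((R t)⁻¹ • x) hGq,
      SSCV.partial_v g (Real.log (R t)) ((R t)⁻¹ • x) ((R t ^ A)⁻¹ • v - (R t)⁻¹ • x) ((R t ^ A)⁻¹ • v - (R t)⁻¹ • x) hGq] at key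
  -- linear decomposition of the direction vectors
  have hsplit : fderiv ℝ (fun p : ℝ × Phase d × Phase d => g p.1 p.2.1 p.2.2) (Real.log (R t), (R t)⁻¹ • x, (R t ^ A)⁻¹ • v - (R t)⁻¹ • x) ((R t ^ A / R t, (-(R t ^ A) / R t ^ 2) • x, (-(R t ^ A * A * R t ^ (A - 1)) / (R t ^ A) ^ 2) • v - (-(R t ^ A) / R t ^ 2) • x) : ℝ × Phase d × Phase d) + fderiv ℝ (fun p : ℝ × Phase d × Phase d => g p.1 p.2.1 p.2.2) (Real.log (R t), (R t)⁻¹ • x, (R t ^ A)⁻¹ • v - (R t)⁻¹ • x) (((0:ℝ), (R t)⁻¹ • v, -((R t)⁻¹ • v)) : ℝ × Phase d × Phase d)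
      = (R t ^ A / R t) * fderiv ℝ (fun p : ℝ × Phase d × Phase d => g p.1 p.2.1 p.2.2) (Real.log (R t), (R t)⁻¹ • x, (R t ^ A)⁻¹ • v - (R t)⁻¹ • x) (((1:ℝ), (0:Phase d), (0:Phase d)) : ℝ × Phase d × Phase d)
        + (R t ^ A / R t) * fderiv ℝ (fun p : ℝ × Phase d × Phase d => g p.1 p.2.1 p.2.2) (Real.log (R t), (R t)⁻¹ • x, (R t ^ A)⁻¹ • v - (R t)⁻¹ • x) (((0:ℝ), ((R t ^ A)⁻¹ • v - (R t)⁻¹ • x), (0:Phase d)) : ℝ × Phase d × Phase d)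
        - (A * (R t ^ A / R t)) * fderiv ℝ (fun p : ℝ × Phase d × Phase d => g p.1 p.2.1 p.2.2) (Real.log (R t), (R t)⁻¹ • x, (R t ^ A)⁻¹ • v - (R t)⁻¹ • x) (((0:ℝ), (0:Phase d), ((R t)⁻¹ • x)) : ℝ × Phase d × Phase d)
        - ((1+A) * (R t ^ A / R t)) * fderiv ℝ (fun p : ℝ × Phase d × Phase d => g p.1 p.2.1 p.2.2) (Real.log (R t), (R t)⁻¹ • x, (R t ^ A)⁻¹ • v - (R t)⁻¹ • x) (((0:ℝ), (0:Phase d), ((R t ^ A)⁻¹ • v - (R t)⁻¹ • x)) : ℝ × Phase d × Phase d) := by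
    have hvec : (((R t ^ A / R t, (-(R t ^ A) / R t ^ 2) • x, (-(R t ^ A * A * R t ^ (A - 1)) / (R t ^ A) ^ 2) • v - (-(R t ^ A) / R t ^ 2) • x)) : ℝ × Phase d × Phase d) + (((0:ℝ), (R t)⁻¹ • v, -((R t)⁻¹ • v)) : ℝ × Phase d × Phase d)
        = ((R t ^ A / R t)) • (((1:ℝ), (0:Phase d), (0:Phase d)) : ℝ × Phase d × Phase d)
          + ((R t ^ A / R t)) • (((0:ℝ), ((R t ^ A)⁻¹ • v - (R t)⁻¹ • x), (0:Phase d)) : ℝ × Phase d × Phase d)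
          + (-(A * (R t ^ A / R t))) • (((0:ℝ), (0:Phase d), ((R t)⁻¹ • x)) : ℝ × Phase d × Phase d)
          + (-((1+A) * (R t ^ A / R t))) • (((0:ℝ), (0:Phase d), ((R t ^ A)⁻¹ • v - (R t)⁻¹ • x)) : ℝ × Phase d × Phase d) := by
      rw [hrame]
      simp only [Prod.mk_add_mk, Prod.smul_mk, Prod.mk.injEq, smul_eq_mul]
      refine ⟨by ring, ?_, ?_⟩
      · match_scalars <;> (field_simp [hRt.ne', hRApos.ne']; try ring)
      · match_scalars <;> (field_simp [hRt.ne', hRApos.ne']; try ring)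
    rw [← map_add, hvec]
    simp only [map_add, _root_.map_smul, smul_eq_mul]
    ring
  -- put everything together
  rw [hT1, hT2, hfun3, hT3', ← sub_eq_add_neg]
  linear_combination (R t ^ (-(d:ℝ) * (1 + A))) * hsplit + (R t ^ (-(d:ℝ) * (1 + A)) * (R t ^ A / R t)) * key + (g (Real.log (R t)) ((R t)⁻¹ • x) ((R t ^ A)⁻¹ • v - (R t)⁻¹ • x)) * hcd - (lapv d (fun z : Phase d => g (Real.log (R t)) ((R t)⁻¹ • x) z ^ m) ((R t ^ A)⁻¹ • v - (R t)⁻¹ • x)) * hcoefRHS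
end
end

section
/- Let d ≥ 1 be an integer, m ∈ (m₁,1)∪(1,m₂), and γ ∈ ℝ with (1−m)γ > 0. Then on the open set U := { (x,v) ∈ ℝ^d×ℝ^d : (1−m)·(γ + ((1+A)/2)|v|² + ((1+A)A/2)|x|²) > 0 } (which is all of ℝ^d×ℝ^d when m < 1), the function g_γ satisfies pointwise the stationary rescaled equation v·∇_x g_γ − A x·∇_v g_γ = Δ_v(g_γ^m) + (1+A)∇_v·(v g_γ). -/
open MeasureTheory Real Filter Set
open scoped RealInnerProductSpace

noncomputable section

lemma aux1 (d : ℕ) (c g b k : ℝ) (w : Phase d) :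
    HasFDerivAt (fun w : Phase d => c * (g + b * ‖w‖^2 + k)) ((c*(2*b)) • innerSL ℝ w) w := by
  have h := ((((hasStrictFDerivAt_norm_sq w).hasFDerivAt.const_mul b).const_add g).add_const k).const_mul c
  refine h.congr_fderiv ?_
  ext u; simp [smul_smul]; ring

lemma aux2 (d : ℕ) (c k b : ℝ) (w : Phase d) :
    HasFDerivAt (fun w : Phase d => c * (k + b * ‖w‖^2)) ((c*(2*b)) • innerSL ℝ w) w := by
  have h := (((hasStrictFDerivAt_norm_sq w).hasFDerivAt.const_mul b).const_add k).const_mul c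
  refine h.congr_fderiv ?_
  ext u; simp [smul_smul]; ring


/-- `g_γ` is a pointwise stationary solution of the rescaled equation (E')
on the open set where its defining expression is positive. -/
theorem stationary_solution (d : ℕ) (hd : 1 ≤ d) (m : ℝ)
    (hm : m ∈ Ioo (1 - 1 / (d : ℝ)) 1 ∪ Ioo 1 (1 + 1 / (d : ℝ)))
    (A : ℝ) (hA : A = (1 + (d : ℝ) - (d : ℝ) * m) / (3 - (d : ℝ) + (d : ℝ) * m))
    (γ : ℝ) (hγ : (1 - m) * γ > 0) :
    ∀ x v : Phase d,
      (1 - m) * (γ + (1 + A) / 2 * ‖v‖ ^ 2 + (1 + A) * A / 2 * ‖x‖ ^ 2) > 0 →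
      fderiv ℝ (fun y => gP d m A γ y v) x v
          - A * fderiv ℝ (fun w => gP d m A γ x w) v x
        = lapv d (fun w => gP d m A γ x w ^ m) v
          + (1 + A) * ((d : ℝ) * gP d m A γ x v + fderiv ℝ (fun w => gP d m A γ x w) v v) := by
  intro x v hpos
  have hd1 : (1:ℝ) ≤ (d:ℝ) := by exact_mod_cast hd
  have hdiv : (1:ℝ)/(d:ℝ) ≤ 1 := by
    rw [div_le_one (by linarith)]; exact hd1
  have hm0 : 0 < m := by
    rcases hm with h | h
    · have := h.1; linarith
    · have := h.1; linarith
  have hm1 : m ≠ 1 := by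
    rcases hm with h | h
    exacts [ne_of_lt h.2, ne_of_gt h.1]
  have hm1' : m - 1 ≠ 0 := sub_ne_zero.mpr hm1
  -- the value E at (x, v)
  set E : ℝ := (1 - m) / m * (γ + (1 + A) / 2 * ‖v‖ ^ 2 + (1 + A) * A / 2 * ‖x‖ ^ 2) with hEdef
  have hE : 0 < E := by
    rw [hEdef, div_mul_eq_mul_div]
    exact div_pos hpos hm0
  -- x-direction function
  have hGx : ∀ y : Phase d, HasFDerivAt
      (fun y : Phase d => (1 - m) / m * (γ + (1 + A) / 2 * ‖v‖ ^ 2 + (1 + A) * A / 2 * ‖y‖ ^ 2))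
      (((1-m)/m*(2*((1+A)*A/2))) • innerSL ℝ y) y :=
    fun y => aux2 d ((1-m)/m) (γ + (1 + A) / 2 * ‖v‖ ^ 2) ((1+A)*A/2) y
  -- v-direction function
  have hFv : ∀ w : Phase d, HasFDerivAt
      (fun w : Phase d => (1 - m) / m * (γ + (1 + A) / 2 * ‖w‖ ^ 2 + (1 + A) * A / 2 * ‖x‖ ^ 2))
      (((1-m)/m*(2*((1+A)/2))) • innerSL ℝ w) w :=
    fun w => aux1 d ((1-m)/m) γ ((1+A)/2) ((1 + A) * A / 2 * ‖x‖ ^ 2) w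
  -- eventual positivity
  have hopenx : ∀ᶠ y in nhds x, 0 < (1 - m) / m * (γ + (1 + A) / 2 * ‖v‖ ^ 2 + (1 + A) * A / 2 * ‖y‖ ^ 2) := by
    have hc : Continuous (fun y : Phase d => (1 - m) / m * (γ + (1 + A) / 2 * ‖v‖ ^ 2 + (1 + A) * A / 2 * ‖y‖ ^ 2)) := by fun_prop
    exact (hc.tendsto x).eventually (eventually_gt_nhds hE)
  have hopenv : ∀ᶠ w in nhds v, 0 < (1 - m) / m * (γ + (1 + A) / 2 * ‖w‖ ^ 2 + (1 + A) * A / 2 * ‖x‖ ^ 2) := by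
    have hc : Continuous (fun w : Phase d => (1 - m) / m * (γ + (1 + A) / 2 * ‖w‖ ^ 2 + (1 + A) * A / 2 * ‖x‖ ^ 2)) := by fun_prop
    exact (hc.tendsto v).eventually (eventually_gt_nhds hE)
  -- eventual equalities
  have ev1 : (fun y => gP d m A γ y v) =ᶠ[nhds x]
      fun y => ((1 - m) / m * (γ + (1 + A) / 2 * ‖v‖ ^ 2 + (1 + A) * A / 2 * ‖y‖ ^ 2)) ^ (1/(m-1)) := by
    filter_upwards [hopenx] with y hy
    simp only [gP, max_eq_left hy.le]
  have ev2 : (fun w => gP d m A γ x w) =ᶠ[nhds v]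
      fun w => ((1 - m) / m * (γ + (1 + A) / 2 * ‖w‖ ^ 2 + (1 + A) * A / 2 * ‖x‖ ^ 2)) ^ (1/(m-1)) := by
    filter_upwards [hopenv] with w hw
    simp only [gP, max_eq_left hw.le]
  have ev3 : (fun w => gP d m A γ x w ^ m) =ᶠ[nhds v]
      fun w => ((1 - m) / m * (γ + (1 + A) / 2 * ‖w‖ ^ 2 + (1 + A) * A / 2 * ‖x‖ ^ 2)) ^ (m/(m-1)) := by
    filter_upwards [hopenv] with w hw
    simp only [gP, max_eq_left hw.le]
    rw [← Real.rpow_mul hw.le, show 1/(m-1)*m = m/(m-1) by ring]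
  -- fderiv in x-direction
  have hDx : fderiv ℝ (fun y => gP d m A γ y v) x =
      (1/(m-1) * E ^ (1/(m-1) - 1)) • (((1-m)/m*(2*((1+A)*A/2))) • innerSL ℝ x) := by
    rw [ev1.fderiv_eq]
    exact ((hGx x).rpow_const (Or.inl hE.ne')).fderiv
  -- fderiv in v-direction
  have hDv : fderiv ℝ (fun w => gP d m A γ x w) v =
      (1/(m-1) * E ^ (1/(m-1) - 1)) • (((1-m)/m*(2*((1+A)/2))) • innerSL ℝ v) := by
    rw [ev2.fderiv_eq]
    exact ((hFv v).rpow_const (Or.inl hE.ne')).fderiv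
  -- Laplacian terms
  have hLap : ∀ i : Fin d,
      fderiv ℝ (fun w => fderiv ℝ (fun w' => gP d m A γ x w' ^ m) w (EuclideanSpace.single i 1)) v
        (EuclideanSpace.single i 1)
      = (m/(m-1) * ((1-m)/m*(2*((1+A)/2)))) *
          (E ^ (m/(m-1) - 1) * 1
            + v i * ((m/(m-1) - 1) * E ^ (m/(m-1) - 1 - 1) * ((1-m)/m*(2*((1+A)/2)) * v i))) := by
    intro i
    have hev : (fun w => fderiv ℝ (fun w' => gP d m A γ x w' ^ m) w (EuclideanSpace.single i 1))
        =ᶠ[nhds v] fun w => (m/(m-1) * ((1-m)/m*(2*((1+A)/2)))) *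
          ((((1 - m) / m * (γ + (1 + A) / 2 * ‖w‖ ^ 2 + (1 + A) * A / 2 * ‖x‖ ^ 2)) ^ (m/(m-1) - 1)) * w i) := by
      filter_upwards [ev3.fderiv (𝕜 := ℝ), hopenv] with w hw hwpos
      rw [hw, (((hFv w).rpow_const (Or.inl hwpos.ne')).fderiv)]
      simp [EuclideanSpace.inner_single_right]
      ring
    rw [hev.fderiv_eq]
    have h1 : HasFDerivAt
        (fun w : Phase d => ((1 - m) / m * (γ + (1 + A) / 2 * ‖w‖ ^ 2 + (1 + A) * A / 2 * ‖x‖ ^ 2)) ^ (m/(m-1) - 1))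
        (((m/(m-1) - 1) * E ^ (m/(m-1) - 1 - 1)) • (((1-m)/m*(2*((1+A)/2))) • innerSL ℝ v)) v :=
      (hFv v).rpow_const (Or.inl hE.ne')
    have h2 : HasFDerivAt (fun w : Phase d => w i) (EuclideanSpace.proj (𝕜 := ℝ) i) v :=
      (EuclideanSpace.proj (𝕜 := ℝ) i).hasFDerivAt
    have h3 := (h1.mul h2).const_mul (m/(m-1) * ((1-m)/m*(2*((1+A)/2))))
    rw [(show HasFDerivAt (fun w : Phase d => (m/(m-1) * ((1-m)/m*(2*((1+A)/2)))) * (((1 - m) / m * (γ + (1 + A) / 2 * ‖w‖ ^ 2 + (1 + A) * A / 2 * ‖x‖ ^ 2)) ^ (m/(m-1) - 1) * w i)) _ v from h3).fderiv]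
    simp [EuclideanSpace.inner_single_right, ← hEdef]
    ring
  -- sum of squares of coordinates
  have hsum : ∑ i : Fin d, (v i)^2 = ‖v‖^2 := by
    rw [EuclideanSpace.norm_eq, Real.sq_sqrt (by positivity)]
    simp [sq_abs]
  have hgval : gP d m A γ x v = E ^ (1/(m-1)) := by
    simp only [gP]
    rw [← hEdef, max_eq_left hE.le]
  have hsum2 : lapv d (fun w => gP d m A γ x w ^ m) v =
      (d:ℝ) * ((m/(m-1) * ((1-m)/m*(2*((1+A)/2)))) * E ^ (m/(m-1) - 1))
      + ((m/(m-1) * ((1-m)/m*(2*((1+A)/2)))) *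
          ((m/(m-1) - 1) * E ^ (m/(m-1) - 1 - 1) * ((1-m)/m*(2*((1+A)/2))))) * ‖v‖^2 := by
    simp only [lapv]
    have step : ∀ i : Fin d,
        fderiv ℝ (fun w => fderiv ℝ (fun w' => gP d m A γ x w' ^ m) w
            (EuclideanSpace.single i 1)) v (EuclideanSpace.single i 1)
        = (m/(m-1) * ((1-m)/m*(2*((1+A)/2)))) * E ^ (m/(m-1) - 1)
          + ((m/(m-1) * ((1-m)/m*(2*((1+A)/2)))) *
              ((m/(m-1) - 1) * E ^ (m/(m-1) - 1 - 1) * ((1-m)/m*(2*((1+A)/2))))) * (v i)^2 :=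
      fun i => (hLap i).trans (by ring)
    rw [Finset.sum_congr rfl (fun i _ => step i), Finset.sum_add_distrib, Finset.sum_const,
      ← Finset.mul_sum, hsum, Finset.card_univ, Fintype.card_fin, nsmul_eq_mul]
  rw [hDx, hDv, hsum2, hgval]
  simp only [ContinuousLinearMap.smul_apply, innerSL_apply_apply, smul_eq_mul]
  rw [real_inner_comm x v, real_inner_self_eq_norm_sq]
  have e1 : m/(m-1) - 1 = 1/(m-1) := by rw [div_sub_one hm1', show m-(m-1)=1 by ring]
  rw [e1]
  have hqc : m/(m-1) * ((1-m)/m) = -1 := by field_simp; ring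
  linear_combination (-((1+A)*(d:ℝ)*(E^(1/(m-1)))
      + (1+A)^2*((1-m)/m)*(1/(m-1))*(E^(1/(m-1)-1))*‖v‖^2)) * hqc
end
end

section
/- Let d ≥ 1 be an integer and m ∈ (m₁,1)∪(1,m₂), with the additional condition 1/2 < m < 3/2 when d = 1, and let f₀ satisfy Assumption (I). Let g be a distributional solution of the rescaled equation (E') with initial datum g₀(x,v) = f₀(x, v+x) satisfying g_{γ₁}(x,v) ≤ g(t,x,v) ≤ g_{γ₂}(x,v) for a.e. (x,v) and every t ≥ 0. Then sup_{t ≥ 0} ∫∫ ( |x|² + |v|² ) · | g(t,x,v) − g_⋆(x,v) | dx dv < ∞. -/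
open MeasureTheory Real Filter Set
open scoped RealInnerProductSpace

noncomputable section

section AuxLemmas

lemma mvt_rpow {p α β : ℝ} (hp : p < 0) (hα : 0 < α) (hαβ : α ≤ β) :
    α ^ p - β ^ p ≤ (-p) * α ^ (p - 1) * (β - α) := by
  rcases eq_or_lt_of_le hαβ with rfl | h
  · simp
  · obtain ⟨c, hc, hderiv⟩ := exists_hasDerivAt_eq_slope (fun x => x ^ p)
      (fun x => p * x ^ (p - 1)) h
      (ContinuousOn.rpow_const continuousOn_id fun x hx =>
        Or.inl (ne_of_gt (lt_of_lt_of_le hα hx.1)))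
      (fun x hx => Real.hasDerivAt_rpow_const (Or.inl (ne_of_gt (hα.trans hx.1))))
    have hβα : 0 < β - α := sub_pos.2 h
    have heq : β ^ p - α ^ p = p * c ^ (p - 1) * (β - α) := by
      rw [hderiv]; field_simp
    have hcb : c ^ (p - 1) ≤ α ^ (p - 1) :=
      Real.rpow_le_rpow_of_nonpos hα hc.1.le (by linarith)
    have h1 : α ^ p - β ^ p = (-p) * c ^ (p - 1) * (β - α) := by linarith [heq]
    rw [h1]
    have hnp : 0 < -p := neg_pos.2 hp
    have := mul_le_mul_of_nonneg_right hcb hβα.le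
    nlinarith

lemma integrable_japanese (d : ℕ) (p : ℝ) (hp : p < -(d : ℝ)) :
    Integrable (fun q : Phase d × Phase d => ((1 : ℝ) + ‖q‖) ^ (2 * p)) := by
  haveI : (volume : Measure (Phase d × Phase d)).IsAddHaarMeasure :=
    MeasureTheory.Measure.prod.instIsAddHaarMeasure volume volume
  have h : (Module.finrank ℝ (Phase d × Phase d) : ℝ) < -(2 * p) := by
    rw [Module.finrank_prod, finrank_euclideanSpace_fin]
    push_cast; linarith
  have := integrable_one_add_norm (E := Phase d × Phase d) (μ := volume) h
  simpa using this

/-- The quadratic form in the profile. -/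
noncomputable def QQ (d : ℕ) (A : ℝ) (q : Phase d × Phase d) : ℝ :=
  (1 + A) / 2 * ‖q.2‖ ^ 2 + (1 + A) * A / 2 * ‖q.1‖ ^ 2

lemma gP_eq (d : ℕ) (m A γ : ℝ) (q : Phase d × Phase d) :
    gP d m A γ q.1 q.2 = (max ((1 - m) / m * (γ + QQ d A q)) 0) ^ (1 / (m - 1)) := by
  unfold gP QQ; ring_nf

lemma QQ_nonneg {d : ℕ} {A : ℝ} (hA : 0 ≤ A) (q : Phase d × Phase d) : 0 ≤ QQ d A q := by
  unfold QQ; positivity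

lemma QQ_ge {d : ℕ} {A : ℝ} (hA : 0 < A) (hA1 : A ≤ 1) (q : Phase d × Phase d) :
    (1 + A) * A / 2 * ‖q‖ ^ 2 ≤ QQ d A q := by
  have h1 : 0 ≤ ‖q.1‖ := norm_nonneg _
  have h2 : 0 ≤ ‖q.2‖ := norm_nonneg _
  have hba' : (1 + A) * A / 2 ≤ (1 + A) / 2 := by
    have h3 : (1 + A) * A ≤ (1 + A) * 1 := mul_le_mul_of_nonneg_left hA1 (by linarith)
    linarith
  have hb0 : (0:ℝ) ≤ (1 + A) * A / 2 :=
    div_nonneg (mul_nonneg (by linarith) hA.le) (by norm_num)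
  rw [Prod.norm_def]
  unfold QQ
  rcases max_cases ‖q.1‖ ‖q.2‖ with ⟨he, _⟩ | ⟨he, _⟩ <;> rw [he]
  · have h4 : 0 ≤ (1 + A) / 2 * ‖q.2‖ ^ 2 := mul_nonneg (by linarith) (sq_nonneg _)
    linarith
  · have h3 : (1 + A) * A / 2 * ‖q.2‖ ^ 2 ≤ (1 + A) / 2 * ‖q.2‖ ^ 2 :=
      mul_le_mul_of_nonneg_right hba' (sq_nonneg _)
    have h4 : 0 ≤ (1 + A) * A / 2 * ‖q.1‖ ^ 2 := mul_nonneg hb0 (sq_nonneg _)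
    linarith

lemma QQ_weight {d : ℕ} {A : ℝ} (hA : 0 < A) (hA1 : A ≤ 1) (q : Phase d × Phase d) :
    (1 + A) * A / 2 * (‖q.1‖ ^ 2 + ‖q.2‖ ^ 2) ≤ QQ d A q := by
  have h1 : 0 ≤ ‖q.1‖ := norm_nonneg _
  have h2 : 0 ≤ ‖q.2‖ := norm_nonneg _
  have hba' : (1 + A) * A / 2 ≤ (1 + A) / 2 := by
    have h3 : (1 + A) * A ≤ (1 + A) * 1 := mul_le_mul_of_nonneg_left hA1 (by linarith)
    linarith
  have h3 : (1 + A) * A / 2 * ‖q.2‖ ^ 2 ≤ (1 + A) / 2 * ‖q.2‖ ^ 2 :=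
    mul_le_mul_of_nonneg_right hba' (sq_nonneg _)
  have h4 : (1 + A) * A / 2 * (‖q.1‖ ^ 2 + ‖q.2‖ ^ 2)
      = (1 + A) * A / 2 * ‖q.1‖ ^ 2 + (1 + A) * A / 2 * ‖q.2‖ ^ 2 := by ring
  unfold QQ
  linarith

set_option maxHeartbeats 1600000 in
lemma key_lt (d : ℕ) (hd : 1 ≤ d) (m A γ γ' : ℝ)
    (hm1 : 1 - 1 / (d : ℝ) < m) (hmlt : m < 1) (hm0 : 0 < m)
    (hApos : 0 < A) (hAlt : A < 1) (hγ : 0 < γ) (hγ' : 0 < γ') :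
    Integrable (fun q : Phase d × Phase d =>
      (‖q.1‖ ^ 2 + ‖q.2‖ ^ 2) * |gP d m A γ q.1 q.2 - gP d m A γ' q.1 q.2|) := by
  have hd0 : (0 : ℝ) < d := by exact_mod_cast Nat.lt_of_lt_of_le Nat.zero_lt_one hd
  set c : ℝ := (1 - m) / m with hc_def
  have hc : 0 < c := div_pos (by linarith) hm0
  set p : ℝ := 1 / (m - 1) with hp_def
  have hp_neg : p < 0 := div_neg_of_pos_of_neg one_pos (by linarith)
  have h1m : (0:ℝ) < 1 - m := by linarith
  have hp : p < -(d : ℝ) := by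
    have h2 : (d:ℝ) * (1 - m) < 1 := by
      have : 1 - m < 1 / (d:ℝ) := by linarith
      calc (d:ℝ) * (1 - m) < (d:ℝ) * (1/(d:ℝ)) := by
            exact mul_lt_mul_of_pos_left this hd0
        _ = 1 := by field_simp
    have h3 : (d:ℝ) < 1 / (1 - m) := (lt_div_iff₀ h1m).2 (by linarith)
    have h4 : p = -(1 / (1 - m)) := by
      rw [hp_def, show m - 1 = -(1 - m) by ring, div_neg]
    rw [h4]; linarith
  set b : ℝ := (1 + A) * A / 2 with hb_def
  have hb : 0 < b := by positivity
  set γm : ℝ := min γ γ' with hγm_def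
  have hγm : 0 < γm := lt_min hγ hγ'
  set δ : ℝ := min γm b with hδ_def
  have hδ : 0 < δ := lt_min hγm hb
  set K : ℝ := ((-p) * |γ - γ'| / b) * (c * δ / 2) ^ p with hK_def
  refine ((integrable_japanese d p hp).const_mul K).mono' ?_ (ae_of_all _ ?_)
  · apply Measurable.aestronglyMeasurable
    apply Measurable.mul (by fun_prop)
    apply Measurable.abs
    exact Measurable.sub (by unfold gP; fun_prop) (by unfold gP; fun_prop)
  · intro q
    set s : ℝ := QQ d A q with hs_def
    have hs0 : 0 ≤ s := QQ_nonneg hApos.le q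
    set γM : ℝ := max γ γ' with hγM_def
    set α : ℝ := c * (γm + s) with hα_def
    set β : ℝ := c * (γM + s) with hβ_def
    have hαpos : 0 < α := mul_pos hc (by positivity)
    have hαβ : α ≤ β := by
      apply mul_le_mul_of_nonneg_left (add_le_add min_le_max le_rfl) hc.le
    have hβp_le : β ^ p ≤ α ^ p := Real.rpow_le_rpow_of_nonpos hαpos hαβ hp_neg.le
    have hrw : ∀ γ₀ : ℝ, 0 < γ₀ → gP d m A γ₀ q.1 q.2 = (c * (γ₀ + s)) ^ p := by
      intro γ₀ h0
      rw [gP_eq]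
      show (max (c * (γ₀ + s)) 0) ^ p = (c * (γ₀ + s)) ^ p
      rw [max_eq_left (mul_pos hc (by linarith)).le]
    have habs : |gP d m A γ q.1 q.2 - gP d m A γ' q.1 q.2| = α ^ p - β ^ p := by
      rw [hrw γ hγ, hrw γ' hγ']
      rcases le_total γ γ' with h | h
      · have hαe : α = c * (γ + s) := by rw [hα_def, hγm_def, min_eq_left h]
        have hβe : β = c * (γ' + s) := by rw [hβ_def, hγM_def, max_eq_right h]
        rw [hαe, hβe]
        apply abs_of_nonneg
        apply sub_nonneg.2
        apply Real.rpow_le_rpow_of_nonpos (mul_pos hc (by linarith)) ?_ hp_neg.le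
        exact mul_le_mul_of_nonneg_left (by linarith) hc.le
      · have hαe : α = c * (γ' + s) := by rw [hα_def, hγm_def, min_eq_right h]
        have hβe : β = c * (γ + s) := by rw [hβ_def, hγM_def, max_eq_left h]
        rw [hαe, hβe, abs_sub_comm]
        apply abs_of_nonneg
        apply sub_nonneg.2
        apply Real.rpow_le_rpow_of_nonpos (mul_pos hc (by linarith)) ?_ hp_neg.le
        exact mul_le_mul_of_nonneg_left (by linarith) hc.le
    have hmvt := mvt_rpow hp_neg hαpos hαβ
    have hβmα : β - α = c * |γ - γ'| := by
      rcases le_total γ γ' with h | h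
      · rw [hα_def, hβ_def, hγM_def, hγm_def, min_eq_left h, max_eq_right h,
          abs_of_nonpos (by linarith : γ - γ' ≤ 0)]; ring
      · rw [hα_def, hβ_def, hγM_def, hγm_def, min_eq_right h, max_eq_left h,
          abs_of_nonneg (by linarith : 0 ≤ γ - γ')]; ring
    set W : ℝ := ‖q.1‖ ^ 2 + ‖q.2‖ ^ 2 with hW_def
    have hW0 : 0 ≤ W := by positivity
    have hWs : b * W ≤ s := QQ_weight hApos hAlt.le q
    have hα1 : α ^ (p - 1) = α ^ p / α := Real.rpow_sub_one (ne_of_gt hαpos) p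
    have hαp_pos : 0 < α ^ p := Real.rpow_pos_of_pos hαpos p
    have hnorm : ‖W * |gP d m A γ q.1 q.2 - gP d m A γ' q.1 q.2|‖
        = W * (α ^ p - β ^ p) := by
      rw [Real.norm_eq_abs, abs_of_nonneg (mul_nonneg hW0 (abs_nonneg _)), habs]
    rw [hnorm]
    have step1 : W * (α ^ p - β ^ p) ≤ W * ((-p) * α ^ (p - 1) * (c * |γ - γ'|)) := by
      apply mul_le_mul_of_nonneg_left _ hW0
      rw [← hβmα]; exact hmvt
    have hnp : 0 < -p := neg_pos.2 hp_neg
    have step2 : W * ((-p) * α ^ (p - 1) * (c * |γ - γ'|))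
        ≤ ((-p) * |γ - γ'| / b) * α ^ p := by
      rw [hα1]
      have hWα : W ≤ α / (c * b) := by
        rw [le_div_iff₀ (by positivity)]
        have e1 : c * (b * W) ≤ c * s := mul_le_mul_of_nonneg_left hWs hc.le
        have e2 : c * s ≤ c * (γm + s) :=
          mul_le_mul_of_nonneg_left (by linarith) hc.le
        calc W * (c * b) = c * (b * W) := by ring
          _ ≤ c * s := e1
          _ ≤ c * (γm + s) := e2
          _ = α := by rw [hα_def]
      have h5 : 0 ≤ (-p) * (α ^ p / α) * (c * |γ - γ'|) := by positivity
      calc W * ((-p) * (α ^ p / α) * (c * |γ - γ'|))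
          ≤ (α / (c * b)) * ((-p) * (α ^ p / α) * (c * |γ - γ'|)) :=
            mul_le_mul_of_nonneg_right hWα h5
        _ = ((-p) * |γ - γ'| / b) * α ^ p := by
            field_simp
    have step3 : ((-p) * |γ - γ'| / b) * α ^ p ≤ K * ((1 + ‖q‖) ^ (2 * p)) := by
      have hbase : (c * δ / 2) * (1 + ‖q‖) ^ 2 ≤ α := by
        have hQge : b * ‖q‖ ^ 2 ≤ s := QQ_ge hApos hAlt.le q
        have hn : 0 ≤ ‖q‖ := norm_nonneg q
        have hsq : (1 + ‖q‖) ^ 2 ≤ 2 * (1 + ‖q‖ ^ 2) := by nlinarith [sq_nonneg (1 - ‖q‖)]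
        have hδγ : δ ≤ γm := min_le_left _ _
        have hδb : δ ≤ b := min_le_right _ _
        have e1 : (c * δ / 2) * (1 + ‖q‖) ^ 2 ≤ (c * δ / 2) * (2 * (1 + ‖q‖ ^ 2)) :=
          mul_le_mul_of_nonneg_left hsq (by positivity)
        have e2 : (c * δ / 2) * (2 * (1 + ‖q‖ ^ 2)) = c * δ + (c * δ) * ‖q‖ ^ 2 := by ring
        have e3 : c * δ ≤ c * γm := mul_le_mul_of_nonneg_left hδγ hc.le
        have e4 : (c * δ) * ‖q‖ ^ 2 ≤ (c * b) * ‖q‖ ^ 2 :=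
          mul_le_mul_of_nonneg_right (mul_le_mul_of_nonneg_left hδb hc.le) (sq_nonneg _)
        have e5 : (c * b) * ‖q‖ ^ 2 ≤ c * s := by
          have e6 : c * (b * ‖q‖ ^ 2) ≤ c * s := mul_le_mul_of_nonneg_left hQge hc.le
          calc (c * b) * ‖q‖ ^ 2 = c * (b * ‖q‖ ^ 2) := by ring
            _ ≤ c * s := e6
        have e7 : α = c * γm + c * s := by rw [hα_def]; ring
        linarith
      have hpos2 : 0 < (c * δ / 2) * (1 + ‖q‖) ^ 2 := by positivity
      have h6 : α ^ p ≤ ((c * δ / 2) * (1 + ‖q‖) ^ 2) ^ p :=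
        Real.rpow_le_rpow_of_nonpos hpos2 hbase hp_neg.le
      have h7 : ((c * δ / 2) * (1 + ‖q‖) ^ 2) ^ p
          = (c * δ / 2) ^ p * (1 + ‖q‖) ^ (2 * p) := by
        rw [Real.mul_rpow (by positivity) (by positivity)]
        congr 1
        rw [← Real.rpow_natCast (1 + ‖q‖) 2, ← Real.rpow_mul (by positivity)]
        norm_num
      rw [hK_def]
      calc ((-p) * |γ - γ'| / b) * α ^ p
          ≤ ((-p) * |γ - γ'| / b) * ((c * δ / 2) ^ p * (1 + ‖q‖) ^ (2 * p)) := by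
            apply mul_le_mul_of_nonneg_left _ (by positivity)
            rw [← h7]; exact h6
        _ = (-p) * |γ - γ'| / b * (c * δ / 2) ^ p * ((1 + ‖q‖) ^ (2 * p)) := by ring
    calc W * (α ^ p - β ^ p) ≤ W * ((-p) * α ^ (p - 1) * (c * |γ - γ'|)) := step1
      _ ≤ ((-p) * |γ - γ'| / b) * α ^ p := step2
      _ ≤ K * ((1 + ‖q‖) ^ (2 * p)) := step3

set_option maxHeartbeats 1600000 in
lemma key_gt (d : ℕ) (m A γ γ' : ℝ) (hmgt : 1 < m)
    (hApos : 0 < A) (hAlt : A < 1) (hγ : γ < 0) (hγ' : γ' < 0) :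
    Integrable (fun q : Phase d × Phase d =>
      (‖q.1‖ ^ 2 + ‖q.2‖ ^ 2) * |gP d m A γ q.1 q.2 - gP d m A γ' q.1 q.2|) := by
  have hm0 : 0 < m := by linarith
  have hc : (1 - m) / m < 0 := div_neg_of_neg_of_pos (by linarith) hm0
  have he : 0 < 1 / (m - 1) := div_pos one_pos (by linarith)
  set b : ℝ := (1 + A) * A / 2 with hb_def
  have hb : 0 < b := by positivity
  set R : ℝ := Real.sqrt ((-γ - γ') / b) with hR_def
  have hR0 : 0 ≤ R := Real.sqrt_nonneg _
  have hRsq : R ^ 2 = (-γ - γ') / b := Real.sq_sqrt (div_nonneg (by linarith) hb.le)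
  have hgP_nonneg : ∀ γ₀ : ℝ, ∀ q : Phase d × Phase d, 0 ≤ gP d m A γ₀ q.1 q.2 := by
    intro γ₀ q
    rw [gP_eq]
    exact Real.rpow_nonneg (le_max_right _ _) _
  have hgP_le : ∀ γ₀ : ℝ, γ₀ < 0 → ∀ q : Phase d × Phase d,
      gP d m A γ₀ q.1 q.2 ≤ ((1 - m) / m * γ₀) ^ (1 / (m - 1)) := by
    intro γ₀ h0 q
    rw [gP_eq]
    apply Real.rpow_le_rpow (le_max_right _ _) ?_ he.le
    apply max_le ?_ (by nlinarith)
    nlinarith [QQ_nonneg hApos.le q]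
  have hsupp : ∀ q : Phase d × Phase d, R < ‖q‖ →
      (‖q.1‖ ^ 2 + ‖q.2‖ ^ 2) * |gP d m A γ q.1 q.2 - gP d m A γ' q.1 q.2| = 0 := by
    intro q hq
    have hQ : b * ‖q‖ ^ 2 ≤ QQ d A q := QQ_ge hApos hAlt.le q
    have hn0 : 0 ≤ ‖q‖ := norm_nonneg q
    have h1 : -γ - γ' < b * ‖q‖ ^ 2 := by
      have h2 : R ^ 2 < ‖q‖ ^ 2 := by nlinarith
      rw [hRsq] at h2
      calc -γ - γ' = ((-γ - γ') / b) * b := by field_simp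
        _ < ‖q‖ ^ 2 * b := by exact mul_lt_mul_of_pos_right h2 hb
        _ = b * ‖q‖ ^ 2 := by ring
    have hz : ∀ γ₀ : ℝ, γ₀ < 0 → -γ₀ ≤ -γ - γ' → gP d m A γ₀ q.1 q.2 = 0 := by
      intro γ₀ h0 hle
      rw [gP_eq]
      have hpos : 0 < γ₀ + QQ d A q := by linarith
      rw [max_eq_right (by nlinarith : (1 - m) / m * (γ₀ + QQ d A q) ≤ 0)]
      exact Real.zero_rpow (ne_of_gt he)
    rw [hz γ hγ (by linarith), hz γ' hγ' (by linarith)]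
    simp
  have hmeas : Measurable (fun q : Phase d × Phase d =>
      (‖q.1‖ ^ 2 + ‖q.2‖ ^ 2) * |gP d m A γ q.1 q.2 - gP d m A γ' q.1 q.2|) := by
    apply Measurable.mul (by fun_prop)
    apply Measurable.abs
    exact Measurable.sub (by unfold gP; fun_prop) (by unfold gP; fun_prop)
  have hind : (fun q : Phase d × Phase d =>
      (‖q.1‖ ^ 2 + ‖q.2‖ ^ 2) * |gP d m A γ q.1 q.2 - gP d m A γ' q.1 q.2|)
      = (Metric.closedBall (0 : Phase d × Phase d) R).indicator
        (fun q => (‖q.1‖ ^ 2 + ‖q.2‖ ^ 2) * |gP d m A γ q.1 q.2 - gP d m A γ' q.1 q.2|) := by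
    funext q
    by_cases hq : q ∈ Metric.closedBall (0 : Phase d × Phase d) R
    · rw [Set.indicator_of_mem hq]
    · rw [Set.indicator_of_notMem hq]
      apply hsupp q
      simpa [Metric.mem_closedBall, dist_zero_right, not_le] using hq
  rw [hind, integrable_indicator_iff Metric.isClosed_closedBall.measurableSet]
  apply Measure.integrableOn_of_bounded
    (M := 2 * R ^ 2 * (((1 - m) / m * γ) ^ (1 / (m - 1)) + ((1 - m) / m * γ') ^ (1 / (m - 1))))
    ((isCompact_closedBall _ _).measure_lt_top).ne hmeas.aestronglyMeasurable
  filter_upwards [ae_restrict_mem Metric.isClosed_closedBall.measurableSet] with q hq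
  have hqR : ‖q‖ ≤ R := by simpa [Metric.mem_closedBall, dist_zero_right] using hq
  have h1 : ‖q.1‖ ≤ R := (norm_fst_le q).trans hqR
  have h2 : ‖q.2‖ ≤ R := (norm_snd_le q).trans hqR
  have hW : ‖q.1‖ ^ 2 + ‖q.2‖ ^ 2 ≤ 2 * R ^ 2 := by
    nlinarith [norm_nonneg q.1, norm_nonneg q.2]
  have hu := hgP_le γ hγ q
  have hu' := hgP_le γ' hγ' q
  have hun := hgP_nonneg γ q
  have hun' := hgP_nonneg γ' q
  have habs : |gP d m A γ q.1 q.2 - gP d m A γ' q.1 q.2|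
      ≤ ((1 - m) / m * γ) ^ (1 / (m - 1)) + ((1 - m) / m * γ') ^ (1 / (m - 1)) := by
    rw [abs_sub_le_iff]
    constructor <;> linarith
  rw [Real.norm_eq_abs, abs_of_nonneg (mul_nonneg (by positivity) (abs_nonneg _))]
  have hW0 : (0:ℝ) ≤ ‖q.1‖ ^ 2 + ‖q.2‖ ^ 2 := by positivity
  exact mul_le_mul hW habs (abs_nonneg _) (by positivity)

lemma key_comb (d : ℕ) (hd : 1 ≤ d) (m A : ℝ)
    (hm1 : 1 - 1 / (d : ℝ) < m) (hm2 : m < 1 + 1 / (d : ℝ)) (hmne : m ≠ 1) (hm0 : 0 < m)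
    (hApos : 0 < A) (hAlt : A < 1)
    (γa γb : ℝ) (ha : (1 - m) * γa > 0) (hb : (1 - m) * γb > 0) :
    Integrable (fun q : Phase d × Phase d =>
      (‖q.1‖ ^ 2 + ‖q.2‖ ^ 2) * |gP d m A γa q.1 q.2 - gP d m A γb q.1 q.2|) := by
  rcases lt_or_gt_of_ne hmne with hlt | hgt
  · have hγa : 0 < γa := by
      rcases mul_pos_iff.1 ha with ⟨h1, h2⟩ | ⟨h1, h2⟩ <;> linarith
    have hγb : 0 < γb := by
      rcases mul_pos_iff.1 hb with ⟨h1, h2⟩ | ⟨h1, h2⟩ <;> linarith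
    exact key_lt d hd m A γa γb hm1 hlt hm0 hApos hAlt hγa hγb
  · have hγa : γa < 0 := by
      rcases mul_pos_iff.1 ha with ⟨h1, h2⟩ | ⟨h1, h2⟩ <;> linarith
    have hγb : γb < 0 := by
      rcases mul_pos_iff.1 hb with ⟨h1, h2⟩ | ⟨h1, h2⟩ <;> linarith
    exact key_gt d m A γa γb hgt hApos hAlt hγa hγb

end AuxLemmas

/-- uniform-in-time bound on the second moment of `|g - g_⋆|`. -/
theorem moment_bound (d : ℕ) (hd : 1 ≤ d) (m : ℝ)
    (hm : m ∈ Ioo (1 - 1 / (d : ℝ)) 1 ∪ Ioo 1 (1 + 1 / (d : ℝ)))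
    (hd1 : d = 1 → 1 / 2 < m ∧ m < 3 / 2)
    (A : ℝ) (hA : A = (1 + (d : ℝ) - (d : ℝ) * m) / (3 - (d : ℝ) + (d : ℝ) * m))
    (γ₁ γ₂ : ℝ) (hγ12 : (1 - m) * γ₂ > (1 - m) * γ₁) (hγ1 : (1 - m) * γ₁ > 0)
    (γs : ℝ) (hγs : (1 - m) * γs > 0)
    (hnorm : (∫ p : Phase d × Phase d, gP d m A γs p.1 p.2) = 1)
    (f₀ : Phase d → Phase d → ℝ) (hI : AssumpI d m A γ₁ γ₂ f₀)
    (g : ℝ → Phase d → Phase d → ℝ)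
    (hreg : RegSol d g) (hweak : WeakSolE' d m A g)
    (hinit : ∀ᵐ p : Phase d × Phase d ∂volume, g 0 p.1 p.2 = f₀ p.1 (p.2 + p.1))
    (hsand : ∀ t : ℝ, 0 ≤ t → ∀ᵐ p : Phase d × Phase d ∂volume,
      gP d m A γ₁ p.1 p.2 ≤ g t p.1 p.2 ∧ g t p.1 p.2 ≤ gP d m A γ₂ p.1 p.2) :
    ∃ C : ℝ, ∀ t : ℝ, 0 ≤ t →
      (∫ p : Phase d × Phase d,
        (‖p.1‖ ^ 2 + ‖p.2‖ ^ 2) * |g t p.1 p.2 - gP d m A γs p.1 p.2|) ≤ C := by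
  have hd0 : (0 : ℝ) < d := by exact_mod_cast Nat.lt_of_lt_of_le Nat.zero_lt_one hd
  have hd1' : (1 : ℝ) ≤ d := by exact_mod_cast hd
  have hdinv : (0 : ℝ) < 1 / (d : ℝ) := by positivity
  have hm1 : 1 - 1 / (d : ℝ) < m := by
    rcases hm with h | h
    · exact h.1
    · linarith [h.1]
  have hm2 : m < 1 + 1 / (d : ℝ) := by
    rcases hm with h | h
    · linarith [h.2]
    · exact h.2
  have hmne : m ≠ 1 := by
    rcases hm with h | h
    exacts [ne_of_lt h.2, ne_of_gt h.1]
  have hm0 : 0 < m := by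
    have h1 : (1 : ℝ) / (d : ℝ) ≤ 1 := by
      rw [div_le_one hd0]; exact hd1'
    linarith
  have hdd : (d : ℝ) * (1 / (d : ℝ)) = 1 := by field_simp
  have h5 : (d : ℝ) * m < (d : ℝ) + 1 := by
    have h := (mul_lt_mul_iff_right₀ hd0).2 hm2
    rw [mul_add, mul_one, hdd] at h
    exact h
  have h6 : (d : ℝ) - 1 < (d : ℝ) * m := by
    have h := (mul_lt_mul_iff_right₀ hd0).2 hm1
    rw [mul_sub, mul_one, hdd] at h
    exact h
  have hApos : 0 < A := by
    rw [hA]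
    apply div_pos <;> linarith
  have hAlt : A < 1 := by
    rw [hA, div_lt_one (by linarith)]
    linarith
  have hγ2 : (1 - m) * γ₂ > 0 := lt_trans hγ1 hγ12
  have hI1 := key_comb d hd m A hm1 hm2 hmne hm0 hApos hAlt γ₁ γs hγ1 hγs
  have hI2 := key_comb d hd m A hm1 hm2 hmne hm0 hApos hAlt γ₂ γs hγ2 hγs
  set h : Phase d × Phase d → ℝ := fun q =>
    (‖q.1‖ ^ 2 + ‖q.2‖ ^ 2) * (|gP d m A γ₁ q.1 q.2 - gP d m A γs q.1 q.2|
      + |gP d m A γ₂ q.1 q.2 - gP d m A γs q.1 q.2|) with hh_def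
  have hinth : Integrable h := by
    have hsum := hI1.add hI2
    have : h = fun q : Phase d × Phase d =>
        (‖q.1‖ ^ 2 + ‖q.2‖ ^ 2) * |gP d m A γ₁ q.1 q.2 - gP d m A γs q.1 q.2|
        + (‖q.1‖ ^ 2 + ‖q.2‖ ^ 2) * |gP d m A γ₂ q.1 q.2 - gP d m A γs q.1 q.2| := by
      funext q; rw [hh_def]; ring
    rw [this]
    exact hsum
  refine ⟨∫ q, h q, fun t ht => ?_⟩
  have hgm := (hreg.2.1 t ht).aestronglyMeasurable
  have hstar : Measurable (fun q : Phase d × Phase d => gP d m A γs q.1 q.2) := by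
    unfold gP; fun_prop
  have hFm : AEStronglyMeasurable (fun q : Phase d × Phase d =>
      (‖q.1‖ ^ 2 + ‖q.2‖ ^ 2) * |g t q.1 q.2 - gP d m A γs q.1 q.2|) volume := by
    apply AEStronglyMeasurable.mul (Measurable.aestronglyMeasurable (by fun_prop))
    have := (hgm.sub hstar.aestronglyMeasurable).norm
    simpa [Real.norm_eq_abs] using this
  have hbound : ∀ᵐ q : Phase d × Phase d ∂volume,
      ‖(‖q.1‖ ^ 2 + ‖q.2‖ ^ 2) * |g t q.1 q.2 - gP d m A γs q.1 q.2|‖ ≤ h q := by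
    filter_upwards [hsand t ht] with q hq
    obtain ⟨hq1, hq2⟩ := hq
    rw [Real.norm_eq_abs, abs_of_nonneg (mul_nonneg (by positivity) (abs_nonneg _)), hh_def]
    apply mul_le_mul_of_nonneg_left ?_ (by positivity)
    rw [abs_sub_le_iff]
    constructor
    · linarith [le_abs_self (gP d m A γ₂ q.1 q.2 - gP d m A γs q.1 q.2),
        abs_nonneg (gP d m A γ₁ q.1 q.2 - gP d m A γs q.1 q.2)]
    · linarith [neg_abs_le (gP d m A γ₁ q.1 q.2 - gP d m A γs q.1 q.2),
        abs_nonneg (gP d m A γ₂ q.1 q.2 - gP d m A γs q.1 q.2)]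
  have hFint : Integrable (fun q : Phase d × Phase d =>
      (‖q.1‖ ^ 2 + ‖q.2‖ ^ 2) * |g t q.1 q.2 - gP d m A γs q.1 q.2|) :=
    hinth.mono' hFm hbound
  exact integral_mono_ae hFint hinth (hbound.mono fun q hq =>
    (le_abs_self _).trans (by rwa [Real.norm_eq_abs] at hq))
end
end

section
/- Let d ≥ 1 be an integer. For every nonnegative g ∈ L¹(ℝ^d×ℝ^d) ∩ L^∞(ℝ^d×ℝ^d) with ∫∫ |v|² g(x,v) dx dv < ∞, the spatial density ρ_g(x) := ∫ g(x,v) dv satisfies ‖ρ_g‖_{L^{1+2/d}(ℝ^d)} ≤ C_d · ‖g‖_{L^∞}^{2/(d+2)} · ( ∫∫ |v|² g(x,v) dx dv )^{d/(d+2)}, with C_d := 2^{d/(d+2)} · ((d+2)/(2d)) · |S^{d−1}|^{2/(d+2)}, where |S^{d−1}| denotes the surface measure of the unit sphere in ℝ^d. -/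
open MeasureTheory Real Filter Set
open scoped RealInnerProductSpace

noncomputable section

lemma lemA (d : ℕ) (hd : 1 ≤ d) (a b ρ : ℝ) (ha : 0 ≤ a) (hb : 0 ≤ b) (hρ : 0 ≤ ρ)
    (h : ∀ R : ℝ, 0 < R → ρ ≤ a * R ^ d + b / R ^ 2) :
    ρ ≤ (((d : ℝ) + 2) / d) * ((d : ℝ) * a / 2) ^ (2 / ((d : ℝ) + 2)) *
        b ^ ((d : ℝ) / ((d : ℝ) + 2)) := by
  set D : ℝ := (d : ℝ) with hDdef
  have hD1 : (1 : ℝ) ≤ D := by rw [hDdef]; exact_mod_cast hd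
  have hD0 : (0 : ℝ) < D := by linarith
  have hD2 : (0 : ℝ) < D + 2 := by linarith
  have hexp2 : 0 < 2 / (D + 2) := by positivity
  have hexpD : 0 < D / (D + 2) := by positivity
  rcases eq_or_lt_of_le hb with hb0 | hbpos
  · -- b = 0
    rw [← hb0, Real.zero_rpow (ne_of_gt hexpD), mul_zero]
    refine le_of_forall_pos_le_add fun ε hε => ?_
    rw [zero_add]
    rcases eq_or_lt_of_le ha with ha0 | hapos
    · have := h 1 one_pos
      simp [← ha0] at this
      linarith
    · set R : ℝ := (ε / a) ^ (1 / D) with hR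
      have hRpos : 0 < R := Real.rpow_pos_of_pos (by positivity) _
      have hRd : R ^ d = ε / a := by
        rw [← Real.rpow_natCast R d, hR, ← Real.rpow_mul (by positivity : (0:ℝ) ≤ ε / a)]
        rw [show 1 / D * (d : ℝ) = 1 by rw [hDdef]; field_simp, Real.rpow_one]
      have := h R hRpos
      rw [hRd, ← hb0] at this
      rw [mul_div_cancel₀ _ hapos.ne'] at this
      simpa using this
  · rcases eq_or_lt_of_le ha with ha0 | hapos
    · -- a = 0
      have h0 : (D * a / 2) ^ (2 / (D + 2)) = 0 := by
        rw [← ha0, mul_zero, zero_div, Real.zero_rpow (ne_of_gt hexp2)]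
      rw [h0, mul_zero, zero_mul]
      refine le_of_forall_pos_le_add fun ε hε => ?_
      rw [zero_add]
      set R : ℝ := Real.sqrt (b / ε) with hR
      have hRpos : 0 < R := Real.sqrt_pos.2 (by positivity)
      have hR2 : R ^ 2 = b / ε := Real.sq_sqrt (by positivity)
      have := h R hRpos
      rwa [← ha0, zero_mul, zero_add, hR2, div_div_eq_mul_div, mul_comm, mul_div_assoc,
        div_self hbpos.ne', mul_one] at this
    · -- main case
      set c : ℝ := 2 * b / (D * a) with hc
      have hcpos : 0 < c := by positivity
      set R : ℝ := c ^ (1 / (D + 2)) with hR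
      have hRpos : 0 < R := Real.rpow_pos_of_pos hcpos _
      have hRd : R ^ d = c ^ (D / (D + 2)) := by
        rw [← Real.rpow_natCast R d, hR, ← Real.rpow_mul hcpos.le]
        congr 1
        rw [← hDdef]; field_simp
      have hR2 : R ^ 2 = c ^ (2 / (D + 2)) := by
        rw [← Real.rpow_natCast R 2, hR, ← Real.rpow_mul hcpos.le]
        congr 1
        push_cast; ring
      refine (h R hRpos).trans_eq ?_
      have e1 : c ^ (D / (D + 2)) = c * c ^ (-(2 / (D + 2))) := by
        have hsplit : D / (D + 2) = 1 + -(2 / (D + 2)) := by field_simp; ring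
        rw [hsplit, Real.rpow_add hcpos, Real.rpow_one]
      have e2 : c ^ (-(2 / (D + 2))) = (D * a / 2) ^ (2 / (D + 2)) * b ^ (-(2 / (D + 2))) := by
        rw [Real.rpow_neg hcpos.le, ← Real.inv_rpow hcpos.le,
          Real.rpow_neg hb, ← Real.inv_rpow hb,
          ← Real.mul_rpow (by positivity) (by positivity)]
        congr 1
        rw [hc]
        field_simp
      have e3 : b * b ^ (-(2 / (D + 2))) = b ^ (D / (D + 2)) := by
        nth_rewrite 1 [← Real.rpow_one b]
        rw [← Real.rpow_add hbpos]
        congr 1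
        field_simp
        ring
      have e4 : b / c ^ (2 / (D + 2)) = b * c ^ (-(2 / (D + 2))) := by
        rw [Real.rpow_neg hcpos.le, div_eq_mul_inv]
      rw [hRd, hR2, e4, e1, e2, ← e3, hc]
      field_simp
      ring

/-- kinetic interpolation inequality
`‖ρ_g‖_{L^{1+2/d}} ≤ C_d ‖g‖_∞^{2/(d+2)} (∫∫ |v|² g)^{d/(d+2)}`,
where `|S^{d-1}| = d · vol(B₁)` is the surface measure of the unit sphere. -/
theorem kinetic_interpolation (d : ℕ) (hd : 1 ≤ d)
    (g : Phase d × Phase d → ℝ) (hg0 : ∀ p, 0 ≤ g p)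
    (hgL1 : Integrable g) (hgLinf : MemLp g ⊤ volume)
    (hgmom : Integrable (fun p : Phase d × Phase d => ‖p.2‖ ^ 2 * g p)) :
    (∫ x : Phase d, (∫ v : Phase d, g (x, v)) ^ (1 + 2 / (d : ℝ))) ^ ((d : ℝ) / (d + 2))
      ≤ (2 : ℝ) ^ ((d : ℝ) / (d + 2)) * (((d : ℝ) + 2) / (2 * d)) *
          ((d : ℝ) * (volume (Metric.ball (0 : Phase d) 1)).toReal) ^ (2 / ((d : ℝ) + 2)) *
          (eLpNorm g ⊤ volume).toReal ^ (2 / ((d : ℝ) + 2)) *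
          (∫ p : Phase d × Phase d, ‖p.2‖ ^ 2 * g p) ^ ((d : ℝ) / (d + 2)) := by
  classical
  haveI : Nonempty (Fin d) := ⟨⟨0, hd⟩⟩
  set D : ℝ := (d : ℝ) with hDdef
  have hD1 : (1 : ℝ) ≤ D := by rw [hDdef]; exact_mod_cast hd
  have hD0 : (0 : ℝ) < D := by linarith
  have hD2 : (0 : ℝ) < D + 2 := by linarith
  set p : ℝ := 1 + 2 / D with hpdef
  set q : ℝ := D / (D + 2) with hqdef
  set L : ℝ := (eLpNorm g ⊤ volume).toReal with hLdef
  set ω : ℝ := (volume (Metric.ball (0 : Phase d) 1)).toReal with hωdef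
  have hωpos : 0 < ω := by
    rw [hωdef]
    exact ENNReal.toReal_pos (Metric.measure_ball_pos volume 0 one_pos).ne' measure_ball_lt_top.ne
  have hL0 : 0 ≤ L := ENNReal.toReal_nonneg
  set T : ℝ := ∫ p : Phase d × Phase d, ‖p.2‖ ^ 2 * g p with hTdef
  have hT0 : 0 ≤ T := integral_nonneg fun pp => mul_nonneg (by positivity) (hg0 pp)
  set ρ : Phase d → ℝ := fun x => ∫ v, g (x, v) with hρdef
  set M : Phase d → ℝ := fun x => ∫ v, ‖v‖ ^ 2 * g (x, v) with hMdef
  have hρ0 : ∀ x, 0 ≤ ρ x := fun x => integral_nonneg fun v => hg0 _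
  have hM0 : ∀ x, 0 ≤ M x := fun x => integral_nonneg fun v => mul_nonneg (by positivity) (hg0 _)
  -- g ≤ L a.e.
  have hgle : ∀ᵐ pp : Phase d × Phase d, g pp ≤ L := by
    filter_upwards [ae_le_eLpNormEssSup (f := g) (μ := volume)] with pp hp
    have h1 : ((‖g pp‖₊ : ENNReal)).toReal ≤ (eLpNormEssSup g volume).toReal :=
      ENNReal.toReal_mono (by rw [← eLpNorm_exponent_top]; exact hgLinf.2.ne) hp
    simpa [hLdef, eLpNorm_exponent_top, Real.norm_of_nonneg (hg0 pp)] using h1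
  have hslice : ∀ᵐ x : Phase d, Integrable (fun v => g (x, v)) ∧
      Integrable (fun v => ‖v‖ ^ 2 * g (x, v)) ∧ ∀ᵐ v : Phase d, g (x, v) ≤ L := by
    have h1 : ∀ᵐ x : Phase d, Integrable (fun v => g (x, v)) :=
      (hgL1 : Integrable g ((volume : Measure (Phase d)).prod volume)).prod_right_ae
    have h2 : ∀ᵐ x : Phase d, Integrable (fun v => ‖v‖ ^ 2 * g (x, v)) :=
      (hgmom : Integrable _ ((volume : Measure (Phase d)).prod volume)).prod_right_ae
    have h3 := Measure.ae_ae_of_ae_prod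
      (hgle : ∀ᵐ pp ∂((volume : Measure (Phase d)).prod volume), g pp ≤ L)
    filter_upwards [h1, h2, h3] with x a b c using ⟨a, b, c⟩
  set K1 : ℝ := ((D + 2) / D) ^ p * (D * (L * ω) / 2) ^ (2 / D) with hK1def
  have hK10 : 0 ≤ K1 := by positivity
  -- pointwise estimate
  have hpt : ∀ᵐ x : Phase d, ρ x ^ p ≤ K1 * M x := by
    filter_upwards [hslice] with x hx
    obtain ⟨hx1, hx2, hx3⟩ := hx
    have hbound : ∀ R : ℝ, 0 < R → ρ x ≤ L * ω * R ^ d + M x / R ^ 2 := by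
      intro R hR
      have hind : Integrable ((Metric.ball (0 : Phase d) R).indicator fun _ => L) :=
        (integrable_indicator_iff measurableSet_ball).2
          (integrableOn_const measure_ball_lt_top.ne)
      have hmaj : Integrable (fun v : Phase d =>
          (Metric.ball (0 : Phase d) R).indicator (fun _ => L) v
            + (R ^ 2)⁻¹ * (‖v‖ ^ 2 * g (x, v))) := hind.add (hx2.const_mul _)
      have hle : ∀ᵐ v : Phase d, g (x, v) ≤
          (Metric.ball (0 : Phase d) R).indicator (fun _ => L) v
            + (R ^ 2)⁻¹ * (‖v‖ ^ 2 * g (x, v)) := by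
        filter_upwards [hx3] with v hv
        by_cases hvR : v ∈ Metric.ball (0 : Phase d) R
        · rw [Set.indicator_of_mem hvR]
          have : 0 ≤ (R ^ 2)⁻¹ * (‖v‖ ^ 2 * g (x, v)) :=
            mul_nonneg (by positivity) (mul_nonneg (by positivity) (hg0 _))
          linarith
        · rw [Set.indicator_of_notMem hvR]
          have hRv : R ≤ ‖v‖ := by
            simpa [Metric.mem_ball, dist_zero_right, not_lt] using hvR
          have h1 : R ^ 2 ≤ ‖v‖ ^ 2 := by nlinarith [norm_nonneg v]
          have h2 : 1 ≤ (R ^ 2)⁻¹ * ‖v‖ ^ 2 := by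
            rw [← div_eq_inv_mul, le_div_iff₀ (by positivity), one_mul]; exact h1
          nlinarith [hg0 (x, v)]
      have hmono := integral_mono_of_nonneg
        (Filter.Eventually.of_forall fun v => hg0 (x, v)) hmaj hle
      have hI : (∫ v : Phase d,
          ((Metric.ball (0 : Phase d) R).indicator (fun _ => L) v
            + (R ^ 2)⁻¹ * (‖v‖ ^ 2 * g (x, v))))
          = L * ω * R ^ d + M x / R ^ 2 := by
        rw [integral_add hind (hx2.const_mul _), integral_indicator_const L measurableSet_ball,
          integral_const_mul, measureReal_def, Measure.addHaar_ball volume (0 : Phase d) hR.le,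
          finrank_euclideanSpace_fin, ENNReal.toReal_mul,
          ENNReal.toReal_ofReal (by positivity : (0:ℝ) ≤ R ^ d), ← hωdef]
        simp only [hMdef, smul_eq_mul]
        field_simp
      rw [hI] at hmono
      exact hmono
    have h4 := lemA d hd (L * ω) (M x) (ρ x) (by positivity) (hM0 x) (hρ0 x) hbound
    have h5 : ρ x ^ p ≤
        (((D + 2) / D) * (D * (L * ω) / 2) ^ (2 / (D + 2)) * M x ^ (D / (D + 2))) ^ p :=
      Real.rpow_le_rpow (hρ0 x) (by rw [← hDdef] at h4; exact h4) (by positivity)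
    refine h5.trans_eq ?_
    rw [Real.mul_rpow (by positivity) (Real.rpow_nonneg (hM0 x) _),
      Real.mul_rpow (by positivity) (Real.rpow_nonneg (by positivity) _),
      ← Real.rpow_mul (by positivity : (0:ℝ) ≤ D * (L * ω) / 2),
      ← Real.rpow_mul (hM0 x)]
    rw [show 2 / (D + 2) * p = 2 / D by rw [hpdef]; field_simp; try ring,
      show D / (D + 2) * p = 1 by rw [hpdef]; field_simp; try ring, Real.rpow_one, hK1def]
  -- integrate
  have hMi : Integrable M := by
    have := (hgmom : Integrable _ ((volume : Measure (Phase d)).prod volume)).integral_prod_left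
    exact this
  have hint : (∫ x : Phase d, ρ x ^ p) ≤ K1 * T := by
    have hmono := integral_mono_of_nonneg
      (Filter.Eventually.of_forall fun x => Real.rpow_nonneg (hρ0 x) p)
      (hMi.const_mul K1) hpt
    have hMT : (∫ x : Phase d, M x) = T := by
      rw [hMdef, hTdef]
      have := integral_integral (μ := (volume : Measure (Phase d)))
        (ν := (volume : Measure (Phase d)))
        (f := fun x v => ‖v‖ ^ 2 * g (x, v))
        (by exact (hgmom : Integrable _ ((volume : Measure (Phase d)).prod volume)))
      simpa [Measure.volume_eq_prod] using this
    rwa [integral_const_mul, hMT] at hmono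
  -- conclude
  have hfin : ((∫ x : Phase d, ρ x ^ p)) ^ q ≤ (K1 * T) ^ q :=
    Real.rpow_le_rpow (integral_nonneg fun x => Real.rpow_nonneg (hρ0 x) p) hint
      (by positivity)
  refine hfin.trans_eq ?_
  rw [Real.mul_rpow hK10 hT0, hK1def,
    Real.mul_rpow (by positivity) (Real.rpow_nonneg (by positivity) _),
    ← Real.rpow_mul (by positivity : (0:ℝ) ≤ (D + 2) / D),
    ← Real.rpow_mul (by positivity : (0:ℝ) ≤ D * (L * ω) / 2)]
  rw [show p * q = 1 by rw [hpdef, hqdef]; field_simp; try ring,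
    show 2 / D * q = 2 / (D + 2) by rw [hqdef]; field_simp; try ring, Real.rpow_one]
  have hsplit : D * (L * ω) / 2 = D * ω * L / 2 := by ring
  rw [hsplit, Real.div_rpow (by positivity) (by norm_num : (0:ℝ) ≤ 2),
    Real.mul_rpow (by positivity) hL0]
  have h2pow : (2 : ℝ) ^ q = 2 / (2 : ℝ) ^ (2 / (D + 2)) := by
    rw [eq_div_iff (by positivity), ← Real.rpow_add two_pos,
      show q + 2 / (D + 2) = 1 by rw [hqdef]; field_simp, Real.rpow_one]
  rw [hqdef] at h2pow ⊢
  rw [h2pow]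
  have h2e : (0:ℝ) < (2:ℝ) ^ (2 / (D + 2)) := by positivity
  field_simp
end
end

section
/- Let d ≥ 1 be an integer, m̃₁ := d/(d+1), and m ∈ (m̃₁, 1). The function φ(s) := ( s^m − 1 − m(s−1) ) / ( (m−1)·Z_m ) restricted to [1,∞) is a strictly increasing bijection from [1,∞) onto [0,∞); let ψ : [0,∞) → [1,∞) denote its inverse. Then for every nonnegative measurable g on ℝ^d×ℝ^d with ∫∫ g dx dv = 1, ∫∫ (|x|² + |v|²) g dx dv < ∞ and g^m ∈ L¹(ℝ^d×ℝ^d), one has (1+A)·((1−m)/(2m)) · ∫∫ |v|² g(x,v) dx dv ≤ Z_m · ψ( Z_m^{−1} · E[g] ). -/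
open MeasureTheory Real Filter Set
open scoped RealInnerProductSpace

noncomputable section

instance (d : ℕ) : (volume : Measure (Phase d × Phase d)).IsAddHaarMeasure :=
  MeasureTheory.Measure.prod.instIsAddHaarMeasure volume volume

namespace MomentEntropyAux

/-- Tangent-line (Bernoulli) inequality for concave rpow. -/
lemma tangent {m : ℝ} (hm0 : 0 < m) (hm1 : m < 1) {a t : ℝ} (ha : 0 < a) (ht : 0 ≤ t) :
    t ^ m ≤ a ^ m + m * a ^ (m - 1) * (t - a) := by
  have h := rpow_one_add_le_one_add_mul_self (s := t / a - 1)
    (by have : 0 ≤ t / a := div_nonneg ht ha.le; linarith) hm0.le hm1.le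
  have he : 1 + (t / a - 1) = t / a := by ring
  rw [he] at h
  have hda : (t / a) ^ m = t ^ m / a ^ m := Real.div_rpow ht ha.le m
  have ham : 0 < a ^ m := Real.rpow_pos_of_pos ha m
  have ham1 : a ^ (m - 1) = a ^ m / a := by
    rw [Real.rpow_sub ha, Real.rpow_one]
  rw [hda, div_le_iff₀ ham] at h
  calc t ^ m ≤ (1 + m * (t / a - 1)) * a ^ m := h
    _ = a ^ m + m * (a ^ m / a) * (t - a) := by field_simp
    _ = a ^ m + m * a ^ (m - 1) * (t - a) := by rw [← ham1]

/-- Abstract algebraic form of the pointwise supporting-line inequality. -/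
lemma alg {m a w t P W Am A1 W1 : ℝ} (hm : m - 1 < 0) (hww : W1 * w = W)
    (tang : P ≤ Am * W + m * (A1 * W1) * (t - a * w)) :
    W * ((Am - 1 - m * (a - 1)) / (m - 1)) + m * (A1 - 1) / (m - 1) * (W1 * t - a * W)
      ≤ (P - W) / (m - 1) + m / (1 - m) * (W1 * (t - w)) := by
  subst hww
  have hne : m - 1 ≠ 0 := hm.ne
  have hne' : (1 : ℝ) - m ≠ 0 := by intro h; apply hne; linarith
  have h2 : ((P - W1 * w) / (m - 1) + m / (1 - m) * (W1 * (t - w)))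
      - (W1 * w * ((Am - 1 - m * (a - 1)) / (m - 1))
          + m * (A1 - 1) / (m - 1) * (W1 * t - a * (W1 * w)))
      = (P - (Am * (W1 * w) + m * (A1 * W1) * (t - a * w))) / (m - 1) := by
    field_simp
    ring
  have h4 : 0 ≤ ((P - W1 * w) / (m - 1) + m / (1 - m) * (W1 * (t - w)))
      - (W1 * w * ((Am - 1 - m * (a - 1)) / (m - 1))
          + m * (A1 - 1) / (m - 1) * (W1 * t - a * (W1 * w))) := by
    rw [h2]
    exact div_nonneg_iff.mpr (Or.inr ⟨by linarith, hm.le⟩)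
  linarith

/-- The pointwise supporting-line inequality. -/
lemma ptwise {m : ℝ} (hm0 : 0 < m) (hm1 : m < 1) {a w t : ℝ} (ha : 0 < a) (hw : 0 < w)
    (ht : 0 ≤ t) :
    w ^ m * ((a ^ m - 1 - m * (a - 1)) / (m - 1))
      + m * (a ^ (m - 1) - 1) / (m - 1) * (w ^ (m - 1) * t - a * w ^ m)
    ≤ (t ^ m - w ^ m) / (m - 1) + m / (1 - m) * (w ^ (m - 1) * (t - w)) := by
  have hm' : m - 1 < 0 := by linarith
  have haw : 0 < a * w := mul_pos ha hw
  have tang := tangent hm0 hm1 haw ht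
  have hmul : (a * w) ^ m = a ^ m * w ^ m := Real.mul_rpow ha.le hw.le
  have hmul1 : (a * w) ^ (m - 1) = a ^ (m - 1) * w ^ (m - 1) := Real.mul_rpow ha.le hw.le
  rw [hmul, hmul1] at tang
  have hww : w ^ (m - 1) * w = w ^ m := by
    nth_rewrite 2 [show w = w ^ (1 : ℝ) from (Real.rpow_one w).symm]
    rw [← Real.rpow_add hw]
    norm_num
  exact alg hm' hww (by linarith [tang])

/-- Integrability via a quadratic-decay bound on phase space. -/
lemma integrable_quad_rpow (d : ℕ) {κ s : ℝ} (hκ : 0 < κ) (hs : (d : ℝ) < s)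
    {F : Phase d × Phase d → ℝ} (hF : AEStronglyMeasurable F volume)
    (hbound : ∀ p, |F p| ≤ (κ * (1 + ‖p.1‖ ^ 2 + ‖p.2‖ ^ 2)) ^ (-s)) :
    Integrable F := by
  have hd0 : (0 : ℝ) ≤ d := Nat.cast_nonneg d
  have hs0 : 0 < s := lt_of_le_of_lt hd0 hs
  have hfin : (Module.finrank ℝ (Phase d × Phase d) : ℝ) < 2 * s := by
    rw [Module.finrank_prod, finrank_euclideanSpace_fin]
    push_cast
    linarith
  have hint : Integrable (fun p : Phase d × Phase d => (1 + ‖p‖ ^ 2) ^ (-(2 * s) / 2)) :=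
    integrable_rpow_neg_one_add_norm_sq hfin
  refine Integrable.mono' (hint.const_mul (κ ^ (-s))) hF
    (Filter.Eventually.of_forall fun p => ?_)
  have h1 : ‖p‖ ^ 2 ≤ ‖p.1‖ ^ 2 + ‖p.2‖ ^ 2 := by
    rw [Prod.norm_def]
    rcases max_cases ‖p.1‖ ‖p.2‖ with ⟨h, _⟩ | ⟨h, _⟩ <;> rw [h] <;>
      nlinarith [norm_nonneg p.1, norm_nonneg p.2]
  have hpos : (0 : ℝ) < κ * (1 + ‖p‖ ^ 2) := by positivity
  have h2 : κ * (1 + ‖p‖ ^ 2) ≤ κ * (1 + ‖p.1‖ ^ 2 + ‖p.2‖ ^ 2) := by nlinarith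
  have h3 : (κ * (1 + ‖p.1‖ ^ 2 + ‖p.2‖ ^ 2)) ^ (-s) ≤ (κ * (1 + ‖p‖ ^ 2)) ^ (-s) :=
    Real.rpow_le_rpow_of_nonpos hpos h2 (by linarith)
  rw [Real.norm_eq_abs]
  calc |F p| ≤ (κ * (1 + ‖p.1‖ ^ 2 + ‖p.2‖ ^ 2)) ^ (-s) := hbound p
    _ ≤ (κ * (1 + ‖p‖ ^ 2)) ^ (-s) := h3
    _ = κ ^ (-s) * (1 + ‖p‖ ^ 2) ^ (-s) := Real.mul_rpow hκ.le (by positivity)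
    _ = κ ^ (-s) * (1 + ‖p‖ ^ 2) ^ (-(2 * s) / 2) := by rw [show -(2 * s) / 2 = -s by ring]

/-- Gaussian integrability on `Phase d`. -/
lemma integrable_gauss (d : ℕ) {b : ℝ} (hb : 0 < b) :
    Integrable (fun v : Phase d => Real.exp (-b * ‖v‖ ^ 2)) := by
  have h := (GaussianFourier.integrable_cexp_neg_mul_sq_norm_add (V := Phase d)
      (b := (b : ℂ)) (by simpa using hb) 0 0).norm
  refine h.congr (Filter.Eventually.of_forall fun v => ?_)
  simp [Complex.norm_exp, ← Complex.ofReal_pow]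

end MomentEntropyAux

set_option maxHeartbeats 1600000

/-- Jensen-type bound on the velocity moment in terms of the relative
entropy, via the inverse `ψ` of `φ(s) = (s^m − 1 − m(s−1))/((m−1) Z_m)` on `[1,∞)`. -/
theorem moment_entropy_bound (d : ℕ) (hd : 1 ≤ d) (m : ℝ)
    (hm : m ∈ Ioo ((d : ℝ) / ((d : ℝ) + 1)) 1)
    (A : ℝ) (hA : A = (1 + (d : ℝ) - (d : ℝ) * m) / (3 - (d : ℝ) + (d : ℝ) * m))
    (γs : ℝ) (hγs : (1 - m) * γs > 0)
    (hnorm : (∫ p : Phase d × Phase d, gP d m A γs p.1 p.2) = 1)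
    (Zm : ℝ) (hZm : Zm = ∫ p : Phase d × Phase d, gP d m A γs p.1 p.2 ^ m)
    (φ : ℝ → ℝ) (hφ : φ = fun s => (s ^ m - 1 - m * (s - 1)) / ((m - 1) * Zm))
    (ψ : ℝ → ℝ) (hψ : ψ = Function.invFunOn φ (Ici 1)) :
    (StrictMonoOn φ (Ici 1) ∧ BijOn φ (Ici 1) (Ici 0)) ∧
    ∀ g : Phase d × Phase d → ℝ, Measurable g → (∀ p, 0 ≤ g p) →
      Integrable g → (∫ p : Phase d × Phase d, g p) = 1 →
      Integrable (fun p : Phase d × Phase d => (‖p.1‖ ^ 2 + ‖p.2‖ ^ 2) * g p) →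
      Integrable (fun p : Phase d × Phase d => g p ^ m) →
      (1 + A) * ((1 - m) / (2 * m)) * (∫ p : Phase d × Phase d, ‖p.2‖ ^ 2 * g p)
        ≤ Zm * ψ (Zm⁻¹ *
            ∫ p : Phase d × Phase d,
              ((g p ^ m - gP d m A γs p.1 p.2 ^ m) / (m - 1)
                + (1 + A) / 2 * (‖p.2‖ ^ 2 + A * ‖p.1‖ ^ 2) *
                    (g p - gP d m A γs p.1 p.2))) := by
    classical
  obtain ⟨hm0', hm1⟩ := hm
  have hd1 : (1:ℝ) ≤ (d:ℝ) := by exact_mod_cast hd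
  have hmd : (d:ℝ) < m * ((d:ℝ) + 1) := by
    have h := hm0'
    rw [div_lt_iff₀ (by positivity)] at h
    linarith [h]
  have hmhalf : 1/2 < m := by nlinarith
  have hm0 : 0 < m := by linarith
  have h1m : 0 < 1 - m := by linarith
  have hm1neg : m - 1 < 0 := by linarith
  have hm1ne : m - 1 ≠ 0 := hm1neg.ne
  have hγ : 0 < γs := by
    rcases mul_pos_iff.mp hγs with ⟨_, h⟩ | ⟨h, _⟩
    · exact h
    · linarith
  have hA0 : 0 < A := by
    rw [hA]; apply div_pos <;> nlinarith
  have hA1 : A ≤ 1 := by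
    rw [hA, div_le_one (by nlinarith)]; nlinarith
  obtain ⟨c, hcq⟩ : ∃ c : ℝ, (1 - m) / m = c := ⟨_, rfl⟩
  have hc0 : 0 < c := by rw [← hcq]; positivity
  obtain ⟨Q, hQp⟩ : ∃ Q : Phase d × Phase d → ℝ,
      ∀ p : Phase d × Phase d,
        (1 + A) / 2 * ‖p.2‖ ^ 2 + (1 + A) * A / 2 * ‖p.1‖ ^ 2 = Q p := ⟨_, fun p => rfl⟩
  obtain ⟨B, hBp⟩ : ∃ B : Phase d × Phase d → ℝ,
      ∀ p : Phase d × Phase d, c * (γs + Q p) = B p := ⟨_, fun p => rfl⟩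
  obtain ⟨w, hwp⟩ : ∃ w : Phase d × Phase d → ℝ,
      ∀ p : Phase d × Phase d, gP d m A γs p.1 p.2 = w p := ⟨_, fun p => rfl⟩
  have hQ0 : ∀ p, 0 ≤ Q p := fun p => by
    rw [← hQp]
    have e1 : (0:ℝ) ≤ (1+A)/2 * ‖p.2‖^2 := mul_nonneg (by linarith) (sq_nonneg _)
    have e2 : (0:ℝ) ≤ (1+A)*A/2 * ‖p.1‖^2 := mul_nonneg (by nlinarith) (sq_nonneg _)
    linarith
  have hB0 : ∀ p, 0 < B p := fun p => by
    rw [← hBp]; nlinarith [hQ0 p]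
  have hwB : ∀ p, w p = B p ^ (1/(m-1)) := by
    intro p
    rw [← hwp, ← hBp, ← hQp]
    simp only [gP]
    have e1 : (0:ℝ) ≤ (1+A)/2 * ‖p.2‖^2 := mul_nonneg (by linarith) (sq_nonneg _)
    have e2 : (0:ℝ) ≤ (1+A)*A/2 * ‖p.1‖^2 := mul_nonneg (by nlinarith) (sq_nonneg _)
    rw [max_eq_left (mul_nonneg (by positivity) (by linarith) :
      (0:ℝ) ≤ (1 - m) / m * (γs + (1 + A) / 2 * ‖p.2‖ ^ 2 + (1 + A) * A / 2 * ‖p.1‖ ^ 2))]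
    rw [← hcq]
    ring_nf
  have hw0 : ∀ p, 0 < w p := fun p => by
    rw [hwB p]; exact Real.rpow_pos_of_pos (hB0 p) _
  have hwm1 : ∀ p, w p ^ (m-1) = B p := fun p => by
    rw [hwB p, ← Real.rpow_mul (hB0 p).le, one_div, inv_mul_cancel₀ hm1ne, Real.rpow_one]
  have hwm : ∀ p, w p ^ m = B p * w p := fun p => by
    rw [← hwm1 p]
    have h := Real.rpow_natCast (w p) 1
    have h2 : w p ^ (m-1) * w p = w p ^ ((m-1)+1) := by
      rw [Real.rpow_add (hw0 p), Real.rpow_one]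
    rw [h2]; norm_num
  have hQcont : Continuous Q := by
    rw [show Q = fun p : Phase d × Phase d =>
      (1 + A) / 2 * ‖p.2‖ ^ 2 + (1 + A) * A / 2 * ‖p.1‖ ^ 2 from funext fun p => (hQp p).symm]
    fun_prop
  have hBcont : Continuous B := by
    rw [show B = fun p => c * (γs + Q p) from funext fun p => (hBp p).symm]
    fun_prop
  have hκ0 : (0:ℝ) < min (c*γs) (c*(1+A)*A/2) :=
    lt_min (by positivity) (by positivity)
  have hBlow : ∀ p : Phase d × Phase d,
      min (c*γs) (c*(1+A)*A/2) * (1 + ‖p.1‖^2 + ‖p.2‖^2) ≤ B p := by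
    intro p
    have h1 : min (c*γs) (c*(1+A)*A/2) ≤ c*γs := min_le_left _ _
    have h2 : min (c*γs) (c*(1+A)*A/2) ≤ c*(1+A)*A/2 := min_le_right _ _
    have h3 : c*(1+A)*A/2 ≤ c*(1+A)/2 := by nlinarith
    rw [← hBp, ← hQp]
    linarith [mul_le_mul_of_nonneg_right h2 (sq_nonneg ‖p.1‖),
      mul_le_mul_of_nonneg_right (h2.trans h3) (sq_nonneg ‖p.2‖), h1]
  have key_int : ∀ s : ℝ, (d:ℝ) < s →
      Integrable (fun p : Phase d × Phase d => B p ^ (-s)) := by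
    intro s hs
    have hmeas : AEStronglyMeasurable (fun p : Phase d × Phase d => B p ^ (-s)) volume :=
      (hBcont.rpow_const fun p => Or.inl (hB0 p).ne').aestronglyMeasurable
    refine MomentEntropyAux.integrable_quad_rpow d hκ0 hs hmeas fun p => ?_
    rw [abs_of_nonneg (Real.rpow_nonneg (hB0 p).le _)]
    exact Real.rpow_le_rpow_of_nonpos (by positivity) (hBlow p)
      (neg_nonpos.mpr (le_of_lt (lt_of_le_of_lt (Nat.cast_nonneg d : (0:ℝ) ≤ (d:ℝ)) hs)))
  have hwneg : ∀ p, w p = B p ^ (-(1/(1-m))) := by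
    intro p
    rw [hwB p]
    congr 1
    rw [one_div, one_div, ← inv_neg, neg_sub]
  have int_w : Integrable w := by
    refine (key_int (1/(1-m)) ?_).congr (Filter.Eventually.of_forall fun p => (hwneg p).symm)
    rw [lt_div_iff₀ h1m]; nlinarith
  have hmβ : (d:ℝ) < m/(1-m) := by rw [lt_div_iff₀ h1m]; nlinarith
  have int_wm : Integrable (fun p => w p ^ m) := by
    refine (key_int (m/(1-m)) hmβ).congr (Filter.Eventually.of_forall fun p => ?_)
    show B p ^ (-(m/(1-m))) = w p ^ m
    rw [hwneg p, ← Real.rpow_mul (hB0 p).le]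
    congr 1
    ring
  have int_Bw : Integrable (fun p => B p * w p) :=
    int_wm.congr (Filter.Eventually.of_forall fun p => hwm p)
  have hmass : ∫ p : Phase d × Phase d, w p = 1 := by
    have h := hnorm; simp only [hwp] at h; exact h
  have hZmw : Zm = ∫ p : Phase d × Phase d, w p ^ m := by
    have h := hZm; simp only [hwp] at h; exact h
  -- Gaussian comparison: 1 ≤ c * γs
  have hcγ : 1 ≤ c * γs := by
    by_contra hlt
    push_neg at hlt
    have hpt : ∀ p, Real.exp (-(1/m) * Q p) ≤ w p := by
      intro p
      rw [hwneg p]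
      have h1 : B p ≤ Real.exp (c * Q p) := by
        have h2 := Real.add_one_le_exp (c * Q p)
        have h3 : B p ≤ 1 + c * Q p := by
          rw [← hBp]; nlinarith [hQ0 p]
        linarith
      have h4 : Real.exp (c * Q p) ^ (-(1/(1-m))) ≤ B p ^ (-(1/(1-m))) :=
        Real.rpow_le_rpow_of_nonpos (hB0 p) h1 (neg_nonpos.mpr (by positivity))
      refine le_trans (le_of_eq ?_) h4
      rw [← Real.exp_mul]
      congr 1
      rw [← hcq]
      field_simp
    have hb1p : (0:ℝ) < (1+A)*A/(2*m) := by positivity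
    have ha1p : (0:ℝ) < (1+A)/(2*m) := by positivity
    have hsplit : ∀ p : Phase d × Phase d, Real.exp (-(1/m) * Q p)
        = Real.exp (-((1+A)*A/(2*m)) * ‖p.1‖^2) * Real.exp (-((1+A)/(2*m)) * ‖p.2‖^2) := by
      intro p
      rw [← Real.exp_add]
      congr 1
      rw [← hQp]
      field_simp
      ring
    have int_gauss : Integrable (fun p : Phase d × Phase d => Real.exp (-(1/m) * Q p)) := by
      rw [show (fun p : Phase d × Phase d => Real.exp (-(1/m) * Q p))
        = fun p => Real.exp (-((1+A)*A/(2*m)) * ‖p.1‖^2) * Real.exp (-((1+A)/(2*m)) * ‖p.2‖^2)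
        from funext hsplit, Measure.volume_eq_prod]
      exact (MomentEntropyAux.integrable_gauss d hb1p).mul_prod
        (MomentEntropyAux.integrable_gauss d ha1p)
    have hval : ∫ p : Phase d × Phase d, Real.exp (-(1/m) * Q p)
        = (π/((1+A)*A/(2*m))) ^ ((d:ℝ)/2) * (π/((1+A)/(2*m))) ^ ((d:ℝ)/2) := by
      rw [show (fun p : Phase d × Phase d => Real.exp (-(1/m) * Q p))
        = fun p => Real.exp (-((1+A)*A/(2*m)) * ‖p.1‖^2) * Real.exp (-((1+A)/(2*m)) * ‖p.2‖^2)
        from funext hsplit, Measure.volume_eq_prod,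
        integral_prod_mul (f := fun x : Phase d => Real.exp (-((1+A)*A/(2*m)) * ‖x‖^2))
          (g := fun v : Phase d => Real.exp (-((1+A)/(2*m)) * ‖v‖^2)),
        GaussianFourier.integral_rexp_neg_mul_sq_norm hb1p,
        GaussianFourier.integral_rexp_neg_mul_sq_norm ha1p]
      norm_num [finrank_euclideanSpace_fin]
    have hπ := Real.pi_gt_three
    have hone1 : 1 < (π/((1+A)*A/(2*m))) ^ ((d:ℝ)/2) := by
      rw [Real.one_lt_rpow_iff_of_pos (by positivity)]
      left
      refine ⟨?_, by positivity⟩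
      rw [lt_div_iff₀ hb1p, one_mul]
      have hb2 : (1+A)*A/(2*m) < 3 := by
        rw [div_lt_iff₀ (by linarith : (0:ℝ) < 2*m)]
        nlinarith
      linarith
    have hone2 : 1 < (π/((1+A)/(2*m))) ^ ((d:ℝ)/2) := by
      rw [Real.one_lt_rpow_iff_of_pos (by positivity)]
      left
      refine ⟨?_, by positivity⟩
      rw [lt_div_iff₀ ha1p, one_mul]
      have ha2 : (1+A)/(2*m) < 3 := by
        rw [div_lt_iff₀ (by linarith : (0:ℝ) < 2*m)]
        nlinarith
      linarith
    have hmono := integral_mono int_gauss int_w hpt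
    rw [hmass, hval] at hmono
    nlinarith
  have hZm1 : 1 ≤ Zm := by
    have hpt : ∀ p, c * γs * w p ≤ w p ^ m := by
      intro p
      rw [hwm p, ← hBp]
      nlinarith [hQ0 p, (hw0 p).le, hc0, mul_nonneg (mul_nonneg hc0.le (hQ0 p)) (hw0 p).le]
    have h3 : ∫ p : Phase d × Phase d, c * γs * w p = c * γs := by
      rw [integral_const_mul, hmass, mul_one]
    have h2 : c * γs ≤ ∫ p : Phase d × Phase d, w p ^ m := by
      rw [← h3]
      exact integral_mono (int_w.const_mul _) int_wm hpt
    rw [hZmw]; linarith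
  have hZm0 : 0 < Zm := by linarith
  -- Part 1: properties of φ
  have hφval : ∀ s : ℝ, φ s = (s ^ m - 1 - m * (s - 1)) / ((m - 1) * Zm) := fun s => by rw [hφ]
  have hFcont : ContinuousOn (fun s : ℝ => s ^ m - 1 - m * (s - 1)) (Ici 1) := by
    refine ContinuousOn.sub (ContinuousOn.sub ?_ continuousOn_const) ?_
    · exact ContinuousOn.rpow_const continuousOn_id fun x hx =>
        Or.inl (ne_of_gt (lt_of_lt_of_le zero_lt_one hx))
    · exact (continuous_const.mul (continuous_id.sub continuous_const)).continuousOn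
  have hFanti : StrictAntiOn (fun s : ℝ => s ^ m - 1 - m * (s - 1)) (Ici 1) := by
    refine strictAntiOn_of_deriv_neg (convex_Ici 1) hFcont ?_
    intro x hx
    rw [interior_Ici] at hx
    have hx1 : (1:ℝ) < x := hx
    have hx0 : x ≠ 0 := by positivity
    have hder : HasDerivAt (fun s : ℝ => s ^ m - 1 - m * (s - 1)) (m * x ^ (m-1) - m) x := by
      have h1 : HasDerivAt (fun s : ℝ => s ^ m) (m * x ^ (m-1)) x :=
        Real.hasDerivAt_rpow_const (Or.inl hx0)
      have h2 : HasDerivAt (fun s : ℝ => m * (s - 1)) m x := by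
        simpa using ((hasDerivAt_id x).sub_const 1).const_mul m
      exact (h1.sub_const 1).sub h2
    rw [hder.deriv]
    have hlt1 : x ^ (m-1) < 1 := Real.rpow_lt_one_of_one_lt_of_neg hx1 hm1neg
    nlinarith
  have hk : (m-1) * Zm < 0 := mul_neg_of_neg_of_pos hm1neg hZm0
  have hφmono : StrictMonoOn φ (Ici 1) := by
    intro x hx y hy hxy
    rw [hφval, hφval]
    have hF : (y ^ m - 1 - m * (y - 1)) < (x ^ m - 1 - m * (x - 1)) := hFanti hx hy hxy
    have h2 : (x ^ m - 1 - m * (x - 1)) / ((m-1)*Zm) - (y ^ m - 1 - m * (y - 1)) / ((m-1)*Zm)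
        = ((x ^ m - 1 - m * (x - 1)) - (y ^ m - 1 - m * (y - 1))) / ((m-1)*Zm) := by ring
    have h3 : ((x ^ m - 1 - m * (x - 1)) - (y ^ m - 1 - m * (y - 1))) / ((m-1)*Zm) < 0 :=
      div_neg_of_pos_of_neg (by linarith) hk
    linarith
  have hφ1 : φ 1 = 0 := by
    rw [hφval]; rw [Real.one_rpow]; norm_num
  have hφmaps : MapsTo φ (Ici 1) (Ici 0) := by
    intro x hx
    rcases eq_or_lt_of_le (show (1:ℝ) ≤ x from hx) with h | h
    · rw [← h, hφ1]; exact Set.self_mem_Ici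
    · have h2 := hφmono self_mem_Ici hx h
      rw [hφ1] at h2
      exact mem_Ici.mpr h2.le
  have hφcont : ContinuousOn φ (Ici 1) := by
    rw [hφ]
    exact hFcont.div_const _
  have hgrow : ∀ y : ℝ, 0 ≤ y → ∃ b : ℝ, 1 ≤ b ∧ y ≤ φ b := by
    intro y hy
    have hs₀1 : 1 ≤ (m/2) ^ (1/(m-1)) :=
      Real.one_le_rpow_of_pos_of_le_one_of_nonpos (by positivity) (by linarith)
        (div_nonpos_of_nonneg_of_nonpos zero_le_one hm1neg.le)
    refine ⟨max ((m/2) ^ (1/(m-1))) ((2*((1-m)*Zm*y+1))/m), le_trans hs₀1 (le_max_left _ _), ?_⟩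
    have hbs₀ : (m/2) ^ (1/(m-1)) ≤ max ((m/2) ^ (1/(m-1))) ((2*((1-m)*Zm*y+1))/m) :=
      le_max_left _ _
    have hb0 : (0:ℝ) < max ((m/2) ^ (1/(m-1))) ((2*((1-m)*Zm*y+1))/m) := by
      have := le_trans hs₀1 hbs₀; linarith
    have hbm : (max ((m/2) ^ (1/(m-1))) ((2*((1-m)*Zm*y+1))/m)) ^ (m-1) ≤ m/2 := by
      have h1 : (max ((m/2) ^ (1/(m-1))) ((2*((1-m)*Zm*y+1))/m)) ^ (m-1)
          ≤ ((m/2) ^ (1/(m-1))) ^ (m-1) :=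
        Real.rpow_le_rpow_of_nonpos (by positivity) hbs₀ hm1neg.le
      have h2 : ((m/2) ^ (1/(m-1))) ^ (m-1) = m/2 := by
        rw [← Real.rpow_mul (by positivity : (0:ℝ) ≤ m/2), one_div,
          inv_mul_cancel₀ hm1ne, Real.rpow_one]
      linarith
    have hbm' : (max ((m/2) ^ (1/(m-1))) ((2*((1-m)*Zm*y+1))/m)) ^ m
        ≤ m/2 * max ((m/2) ^ (1/(m-1))) ((2*((1-m)*Zm*y+1))/m) := by
      have h4 : (max ((m/2) ^ (1/(m-1))) ((2*((1-m)*Zm*y+1))/m)) ^ (m-1)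
            * max ((m/2) ^ (1/(m-1))) ((2*((1-m)*Zm*y+1))/m)
          = (max ((m/2) ^ (1/(m-1))) ((2*((1-m)*Zm*y+1))/m)) ^ ((m-1)+1) := by
        rw [Real.rpow_add hb0, Real.rpow_one]
      have h5 : (max ((m/2) ^ (1/(m-1))) ((2*((1-m)*Zm*y+1))/m)) ^ ((m-1)+1)
          = (max ((m/2) ^ (1/(m-1))) ((2*((1-m)*Zm*y+1))/m)) ^ m := by norm_num
      nlinarith [hbm, hb0, h4, h5]
    have h5 : (2*((1-m)*Zm*y+1))/m ≤ max ((m/2) ^ (1/(m-1))) ((2*((1-m)*Zm*y+1))/m) :=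
      le_max_right _ _
    rw [div_le_iff₀ hm0] at h5
    rw [hφval, le_div_iff_of_neg hk]
    nlinarith [hZm0]
  have hφsurj : SurjOn φ (Ici 1) (Ici 0) := by
    intro y hy
    obtain ⟨b, hb1, hby⟩ := hgrow y hy
    have hsub : Icc (1:ℝ) b ⊆ Ici 1 := Icc_subset_Ici_self
    obtain ⟨x, hx, hxy⟩ := intermediate_value_Icc hb1 (hφcont.mono hsub)
      (by rw [hφ1]; exact ⟨hy, hby⟩)
    exact ⟨x, hsub hx, hxy⟩
  have hφbij : BijOn φ (Ici 1) (Ici 0) := ⟨hφmaps, hφmono.injOn, hφsurj⟩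
  refine ⟨⟨hφmono, hφbij⟩, ?_⟩
  have hψ_spec : ∀ y : ℝ, 0 ≤ y → ψ y ∈ Ici 1 ∧ φ (ψ y) = y := by
    intro y hy
    have hex : ∃ x ∈ Ici (1:ℝ), φ x = y := by
      obtain ⟨x, hx, hxy⟩ := hφsurj (mem_Ici.mpr hy)
      exact ⟨x, hx, hxy⟩
    rw [hψ]
    exact ⟨Function.invFunOn_mem hex, Function.invFunOn_eq hex⟩
  have hψ_le : ∀ u y : ℝ, 1 ≤ u → 0 ≤ y → φ u ≤ y → u ≤ ψ y := by
    intro u y hu hy hle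
    obtain ⟨h1, h2⟩ := hψ_spec y hy
    by_contra hno
    push_neg at hno
    have h3 := hφmono h1 hu hno
    rw [h2] at h3
    linarith
  -- Part 2
  intro g hgmeas hg0 hgint hgmass hgmom hgm
  simp only [hwp]
  have int_v2g : Integrable (fun p : Phase d × Phase d => ‖p.2‖^2 * g p) := by
    refine hgmom.mono' (((continuous_snd.norm.pow 2).measurable.mul hgmeas).aestronglyMeasurable)
      (Filter.Eventually.of_forall fun p => ?_)
    rw [Real.norm_eq_abs, abs_of_nonneg (mul_nonneg (sq_nonneg _) (hg0 p))]
    nlinarith [hg0 p, sq_nonneg ‖p.1‖]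
  have int_x2g : Integrable (fun p : Phase d × Phase d => ‖p.1‖^2 * g p) := by
    refine hgmom.mono' (((continuous_fst.norm.pow 2).measurable.mul hgmeas).aestronglyMeasurable)
      (Filter.Eventually.of_forall fun p => ?_)
    rw [Real.norm_eq_abs, abs_of_nonneg (mul_nonneg (sq_nonneg _) (hg0 p))]
    nlinarith [hg0 p, sq_nonneg ‖p.2‖]
  have int_Qg : Integrable (fun p => Q p * g p) := by
    have he : (fun p : Phase d × Phase d => Q p * g p)
        = fun p => (1+A)/2 * (‖p.2‖^2 * g p) + (1+A)*A/2 * (‖p.1‖^2 * g p) := by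
      funext p; rw [← hQp]; ring
    rw [he]; exact (int_v2g.const_mul _).add (int_x2g.const_mul _)
  have int_Bg : Integrable (fun p => B p * g p) := by
    have he : (fun p : Phase d × Phase d => B p * g p)
        = fun p => c * γs * g p + c * (Q p * g p) := by
      funext p; rw [← hBp]; ring
    rw [he]; exact (hgint.const_mul _).add (int_Qg.const_mul _)
  have int_h : Integrable (fun p : Phase d × Phase d =>
      (g p ^ m - w p ^ m)/(m-1) + (m/(1-m)) * (w p ^ (m-1) * (g p - w p))) := by
    have he : (fun p : Phase d × Phase d =>
        (g p ^ m - w p ^ m)/(m-1) + (m/(1-m)) * (w p ^ (m-1) * (g p - w p)))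
        = fun p => ((g p ^ m) * (1/(m-1)) - (w p ^ m) * (1/(m-1)))
            + ((m/(1-m)) * (B p * g p) - (m/(1-m)) * (B p * w p)) := by
      funext p; rw [hwm1 p]; ring
    rw [he]
    exact ((hgm.mul_const _).sub (int_wm.mul_const _)).add
      ((int_Bg.const_mul _).sub (int_Bw.const_mul _))
  have hE : (∫ p : Phase d × Phase d,
        ((g p ^ m - w p ^ m)/(m-1) + (1+A)/2 * (‖p.2‖^2 + A*‖p.1‖^2) * (g p - w p)))
      = ∫ p : Phase d × Phase d,
        ((g p ^ m - w p ^ m)/(m-1) + (m/(1-m)) * (w p ^ (m-1) * (g p - w p))) := by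
    have he : (fun p : Phase d × Phase d =>
        (g p ^ m - w p ^ m)/(m-1) + (1+A)/2 * (‖p.2‖^2 + A*‖p.1‖^2) * (g p - w p))
        = fun p => ((g p ^ m - w p ^ m)/(m-1) + (m/(1-m)) * (w p ^ (m-1) * (g p - w p)))
            - γs * (g p - w p) := by
      funext p
      rw [hwm1 p, ← hBp, ← hQp, ← hcq]
      field_simp
      ring
    have int2 : Integrable (fun p : Phase d × Phase d => γs * (g p - w p)) := by
      exact (hgint.sub int_w).const_mul γs
    have int3 : Integrable (fun p : Phase d × Phase d => g p - w p) := by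
      exact hgint.sub int_w
    rw [he, integral_sub int_h int2, integral_const_mul, integral_sub hgint int_w, hgmass, hmass]
    norm_num
  rw [hE]
  have hlower : ∀ a : ℝ, 1 ≤ a →
      Zm * ((a^m - 1 - m*(a-1))/(m-1))
        + m*(a^(m-1)-1)/(m-1) * ((∫ p : Phase d × Phase d, B p * g p) - a*Zm)
      ≤ ∫ p : Phase d × Phase d,
          ((g p ^ m - w p ^ m)/(m-1) + (m/(1-m)) * (w p ^ (m-1) * (g p - w p))) := by
    intro a ha
    have ha0 : (0:ℝ) < a := by linarith
    have hpt : ∀ p : Phase d × Phase d,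
        w p ^ m * ((a^m - 1 - m*(a-1))/(m-1))
          + m*(a^(m-1)-1)/(m-1) * (w p ^(m-1) * g p - a * w p ^ m)
        ≤ (g p ^ m - w p ^ m)/(m-1) + (m/(1-m)) * (w p ^ (m-1) * (g p - w p)) :=
      fun p => MomentEntropyAux.ptwise hm0 hm1 ha0 (hw0 p) (hg0 p)
    have he : (fun p : Phase d × Phase d =>
        w p ^ m * ((a^m - 1 - m*(a-1))/(m-1))
          + m*(a^(m-1)-1)/(m-1) * (w p ^(m-1) * g p - a * w p ^ m))
        = fun p => (w p ^ m) * ((a^m - 1 - m*(a-1))/(m-1))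
            + ((m*(a^(m-1)-1)/(m-1)) * (B p * g p) - (m*(a^(m-1)-1)/(m-1) * a) * (w p ^ m)) := by
      funext p; rw [hwm1 p]; ring
    have int_lo : Integrable (fun p : Phase d × Phase d =>
        w p ^ m * ((a^m - 1 - m*(a-1))/(m-1))
          + m*(a^(m-1)-1)/(m-1) * (w p ^(m-1) * g p - a * w p ^ m)) := by
      rw [he]
      exact (int_wm.mul_const _).add ((int_Bg.const_mul _).sub (int_wm.const_mul _))
    have hint := integral_mono int_lo int_h hpt
    have heval : ∫ p : Phase d × Phase d,
        (w p ^ m * ((a^m - 1 - m*(a-1))/(m-1))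
          + m*(a^(m-1)-1)/(m-1) * (w p ^(m-1) * g p - a * w p ^ m))
        = Zm * ((a^m - 1 - m*(a-1))/(m-1))
          + m*(a^(m-1)-1)/(m-1) * ((∫ p : Phase d × Phase d, B p * g p) - a*Zm) := by
      have i1 : Integrable (fun p : Phase d × Phase d => (w p ^ m) * ((a^m - 1 - m*(a-1))/(m-1))) := by
        exact int_wm.mul_const _
      have i2 : Integrable (fun p : Phase d × Phase d => (m*(a^(m-1)-1)/(m-1)) * (B p * g p)) := by
        exact int_Bg.const_mul _
      have i3 : Integrable (fun p : Phase d × Phase d => (m*(a^(m-1)-1)/(m-1) * a) * (w p ^ m)) := by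
        exact int_wm.const_mul _
      have i4 : Integrable (fun p : Phase d × Phase d =>
          (m*(a^(m-1)-1)/(m-1)) * (B p * g p) - (m*(a^(m-1)-1)/(m-1) * a) * (w p ^ m)) := by
        exact i2.sub i3
      rw [he, integral_add i1 i4, integral_sub i2 i3, integral_mul_const,
        integral_const_mul, integral_const_mul, ← hZmw]
      ring
    linarith [hint, le_of_eq heval]
  have hbbar_low : (1+A) * ((1-m)/(2*m)) * (∫ p : Phase d × Phase d, ‖p.2‖^2 * g p) + c*γs
      ≤ ∫ p : Phase d × Phase d, B p * g p := by
    have he : (fun p : Phase d × Phase d => B p * g p)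
        = fun p => (c*γs * g p + (c*(1+A)/2) * (‖p.2‖^2 * g p))
            + (c*(1+A)*A/2) * (‖p.1‖^2 * g p) := by
      funext p; rw [← hBp, ← hQp]; ring
    have hval : ∫ p : Phase d × Phase d, B p * g p
        = c*γs + (c*(1+A)/2) * (∫ p : Phase d × Phase d, ‖p.2‖^2*g p)
          + (c*(1+A)*A/2) * (∫ p : Phase d × Phase d, ‖p.1‖^2*g p) := by
      have j1 : Integrable (fun p : Phase d × Phase d => c*γs * g p) := by
        exact hgint.const_mul _
      have j2 : Integrable (fun p : Phase d × Phase d => (c*(1+A)/2) * (‖p.2‖^2 * g p)) := by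
        exact int_v2g.const_mul _
      have j3 : Integrable (fun p : Phase d × Phase d => (c*(1+A)*A/2) * (‖p.1‖^2 * g p)) := by
        exact int_x2g.const_mul _
      have j12 : Integrable (fun p : Phase d × Phase d =>
          c*γs * g p + (c*(1+A)/2) * (‖p.2‖^2 * g p)) := by exact j1.add j2
      rw [he, integral_add j12 j3, integral_add j1 j2,
        integral_const_mul, integral_const_mul, integral_const_mul, hgmass, mul_one]
    have hX : 0 ≤ ∫ p : Phase d × Phase d, ‖p.1‖^2 * g p :=
      integral_nonneg fun p => mul_nonneg (sq_nonneg _) (hg0 p)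
    have hcoef : (1+A) * ((1-m)/(2*m)) = c*(1+A)/2 := by rw [← hcq]; ring
    have hterm : 0 ≤ (c*(1+A)*A/2) * ∫ p : Phase d × Phase d, ‖p.1‖^2*g p :=
      mul_nonneg (by positivity) hX
    rw [hval, hcoef]
    linarith
  rcases le_or_gt (∫ p : Phase d × Phase d, B p * g p) Zm with hble | hbgt
  · have h0 := hlower 1 le_rfl
    have hsimp : Zm * (((1:ℝ)^m - 1 - m*(1-1))/(m-1))
        + m*((1:ℝ)^(m-1)-1)/(m-1) * ((∫ p : Phase d × Phase d, B p * g p) - 1*Zm) = 0 := by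
      rw [Real.one_rpow, Real.one_rpow]; ring
    have hEh0 : 0 ≤ ∫ p : Phase d × Phase d,
        ((g p ^ m - w p ^ m)/(m-1) + (m/(1-m)) * (w p ^ (m-1) * (g p - w p))) := by
      linarith [h0, le_of_eq hsimp]
    have hψge : 1 ≤ ψ (Zm⁻¹ * ∫ p : Phase d × Phase d,
        ((g p ^ m - w p ^ m)/(m-1) + (m/(1-m)) * (w p ^ (m-1) * (g p - w p)))) :=
      (hψ_spec _ (mul_nonneg (inv_nonneg.mpr hZm0.le) hEh0)).1
    have hstep : (1+A) * ((1-m)/(2*m)) * (∫ p : Phase d × Phase d, ‖p.2‖^2 * g p) ≤ Zm * 1 := by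
      rw [mul_one]; linarith [hbbar_low, hcγ]
    calc (1+A) * ((1-m)/(2*m)) * (∫ p : Phase d × Phase d, ‖p.2‖^2 * g p)
        ≤ Zm * 1 := hstep
      _ ≤ Zm * ψ (Zm⁻¹ * ∫ p : Phase d × Phase d,
            ((g p ^ m - w p ^ m)/(m-1) + (m/(1-m)) * (w p ^ (m-1) * (g p - w p)))) :=
          mul_le_mul_of_nonneg_left hψge hZm0.le
  · have ha1 : 1 ≤ (∫ p : Phase d × Phase d, B p * g p) / Zm :=
      (one_le_div hZm0).mpr hbgt.le
    have ha0 : (0:ℝ) < (∫ p : Phase d × Phase d, B p * g p) / Zm := by linarith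
    have hbZ : (∫ p : Phase d × Phase d, B p * g p)
        - ((∫ p : Phase d × Phase d, B p * g p) / Zm) * Zm = 0 := by
      field_simp; ring
    have h0 := hlower ((∫ p : Phase d × Phase d, B p * g p) / Zm) ha1
    rw [hbZ, mul_zero, add_zero] at h0
    have hφa0 : 0 ≤ φ ((∫ p : Phase d × Phase d, B p * g p) / Zm) :=
      hφmaps (mem_Ici.mpr ha1)
    have hrel : ((((∫ p : Phase d × Phase d, B p * g p) / Zm))^m - 1
        - m*(((∫ p : Phase d × Phase d, B p * g p) / Zm)-1))/(m-1)
        = Zm * φ ((∫ p : Phase d × Phase d, B p * g p) / Zm) := by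
      rw [hφval]
      field_simp
    rw [hrel] at h0
    have hEh0 : 0 ≤ ∫ p : Phase d × Phase d,
        ((g p ^ m - w p ^ m)/(m-1) + (m/(1-m)) * (w p ^ (m-1) * (g p - w p))) :=
      le_trans (mul_nonneg hZm0.le (mul_nonneg hZm0.le hφa0)) h0
    have hφa_le : φ ((∫ p : Phase d × Phase d, B p * g p) / Zm)
        ≤ Zm⁻¹ * ∫ p : Phase d × Phase d,
            ((g p ^ m - w p ^ m)/(m-1) + (m/(1-m)) * (w p ^ (m-1) * (g p - w p))) := by
      have h6 : Zm * φ ((∫ p : Phase d × Phase d, B p * g p) / Zm)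
          ≤ ∫ p : Phase d × Phase d,
            ((g p ^ m - w p ^ m)/(m-1) + (m/(1-m)) * (w p ^ (m-1) * (g p - w p))) := by
        nlinarith [h0, mul_nonneg (mul_nonneg hZm0.le hφa0) (sub_nonneg.mpr hZm1)]
      calc φ ((∫ p : Phase d × Phase d, B p * g p) / Zm)
          = Zm⁻¹ * (Zm * φ ((∫ p : Phase d × Phase d, B p * g p) / Zm)) := by
            field_simp
        _ ≤ Zm⁻¹ * ∫ p : Phase d × Phase d,
              ((g p ^ m - w p ^ m)/(m-1) + (m/(1-m)) * (w p ^ (m-1) * (g p - w p))) :=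
            mul_le_mul_of_nonneg_left h6 (inv_nonneg.mpr hZm0.le)
    have hψa : (∫ p : Phase d × Phase d, B p * g p) / Zm
        ≤ ψ (Zm⁻¹ * ∫ p : Phase d × Phase d,
            ((g p ^ m - w p ^ m)/(m-1) + (m/(1-m)) * (w p ^ (m-1) * (g p - w p)))) :=
      hψ_le _ _ ha1 (mul_nonneg (inv_nonneg.mpr hZm0.le) hEh0) hφa_le
    calc (1+A) * ((1-m)/(2*m)) * (∫ p : Phase d × Phase d, ‖p.2‖^2 * g p)
        ≤ ∫ p : Phase d × Phase d, B p * g p := by linarith [hbbar_low, hcγ]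
      _ = Zm * ((∫ p : Phase d × Phase d, B p * g p) / Zm) := by field_simp
      _ ≤ Zm * ψ (Zm⁻¹ * ∫ p : Phase d × Phase d,
            ((g p ^ m - w p ^ m)/(m-1) + (m/(1-m)) * (w p ^ (m-1) * (g p - w p)))) :=
          mul_le_mul_of_nonneg_left hψa hZm0.le
end
end

section
/- Let d ≥ 1 be an integer and m ∈ (m₁, 1). Then the function h₀ := g_⋆^{2−m} satisfies ℒ h₀ = 0 pointwise on ℝ^d×ℝ^d, where ℒ is the linearization of the rescaled equation around g_⋆, defined by ℒ h := m·Δ_v( g_⋆^{m−1} h ) + (1+A)·∇_v·(v h) − v·∇_x h + A x·∇_v h. -/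
open MeasureTheory Real Filter Set
open scoped RealInnerProductSpace

noncomputable section

/-- The profile `g_γ` in the fast diffusion range `m < 1` (positive everywhere). -/
noncomputable def gPpos (d : ℕ) (m A γ : ℝ) (x v : Phase d) : ℝ :=
  ((1 - m) / m * (γ + (1 + A) / 2 * ‖v‖ ^ 2 + (1 + A) * A / 2 * ‖x‖ ^ 2)) ^ (1 / (m - 1))

/-- The linearized operator `ℒ h = m Δ_v(g_⋆^{m−1} h) + (1+A) ∇_v·(v h) − v·∇_x h + A x·∇_v h`. -/
noncomputable def Lop (d : ℕ) (m A : ℝ) (gs h : Phase d → Phase d → ℝ)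
    (x v : Phase d) : ℝ :=
  m * lapv d (fun w => gs x w ^ (m - 1) * h x w) v
    + (1 + A) * ((d : ℝ) * h x v + fderiv ℝ (fun w => h x w) v v)
    - fderiv ℝ (fun y => h y v) x v
    + A * fderiv ℝ (fun w => h x w) v x

lemma ke_hasFDerivAt_base (d : ℕ) (K β : ℝ) (v : Phase d) :
    HasFDerivAt (fun w : Phase d => K + β * ‖w‖ ^ 2) ((2 * β) • (innerSL ℝ v)) v := by
  have h1 : HasFDerivAt (fun w : Phase d => ⟪w, w⟫)
      ((fderivInnerCLM ℝ (v, v)).comp ((ContinuousLinearMap.id ℝ (Phase d)).prod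
        (ContinuousLinearMap.id ℝ (Phase d)))) v :=
    (hasFDerivAt_id v).inner ℝ (hasFDerivAt_id v)
  have h2 : HasFDerivAt (fun w : Phase d => K + β * ‖w‖ ^ 2)
      (β • ((fderivInnerCLM ℝ (v, v)).comp ((ContinuousLinearMap.id ℝ (Phase d)).prod
        (ContinuousLinearMap.id ℝ (Phase d))))) v := by
    have := (h1.const_mul β).const_add K
    refine this.congr_of_eventuallyEq (Filter.Eventually.of_forall fun w => ?_)
    simp only [real_inner_self_eq_norm_sq]
  refine h2.congr_fderiv ?_
  ext e
  simp [fderivInnerCLM_apply, real_inner_comm]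
  ring

lemma ke_hasFDerivAt_rpow_base (d : ℕ) (K β p : ℝ) (v : Phase d)
    (h : 0 < K + β * ‖v‖ ^ 2) :
    HasFDerivAt (fun w : Phase d => (K + β * ‖w‖ ^ 2) ^ p)
      ((p * (K + β * ‖v‖ ^ 2) ^ (p - 1) * (2 * β)) • innerSL ℝ v) v := by
  have := (ke_hasFDerivAt_base d K β v).rpow_const (p := p) (Or.inl h.ne')
  refine this.congr_fderiv ?_
  rw [smul_smul]

lemma ke_fderiv_rpow_base (d : ℕ) (K β p : ℝ) (v : Phase d)
    (h : 0 < K + β * ‖v‖ ^ 2) (e : Phase d) :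
    fderiv ℝ (fun w : Phase d => (K + β * ‖w‖ ^ 2) ^ p) v e
      = p * (K + β * ‖v‖ ^ 2) ^ (p - 1) * (2 * β) * ⟪v, e⟫ := by
  rw [(ke_hasFDerivAt_rpow_base d K β p v h).fderiv]
  simp

lemma ke_sum_sq_eq_norm_sq (d : ℕ) (v : Phase d) :
    ∑ i : Fin d, v i ^ 2 = ‖v‖ ^ 2 := by
  rw [← real_inner_self_eq_norm_sq]
  simp [PiLp.inner_apply, pow_two, EuclideanSpace.norm_eq, Real.mul_self_sqrt, Finset.sum_nonneg, mul_self_nonneg]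

lemma ke_lapv_rpow (d : ℕ) (K β p : ℝ) (hK : 0 < K) (hβ : 0 ≤ β) (v : Phase d) :
    (∑ i : Fin d,
      fderiv ℝ (fun w => fderiv ℝ (fun w : Phase d => (K + β * ‖w‖ ^ 2) ^ p) w
        (EuclideanSpace.single i 1)) v (EuclideanSpace.single i 1))
      = 2 * β * p * (K + β * ‖v‖ ^ 2) ^ (p - 1) * d
        + 4 * β ^ 2 * p * (p - 1) * (K + β * ‖v‖ ^ 2) ^ (p - 2) * ‖v‖ ^ 2 := by
  have hpos : ∀ w : Phase d, 0 < K + β * ‖w‖ ^ 2 := fun w => by positivity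
  have key : ∀ i : Fin d,
      fderiv ℝ (fun w => fderiv ℝ (fun w : Phase d => (K + β * ‖w‖ ^ 2) ^ p) w
        (EuclideanSpace.single i 1)) v (EuclideanSpace.single i 1)
      = p * (K + β * ‖v‖ ^ 2) ^ (p - 1) * (2 * β)
        + (p * (p - 1) * (K + β * ‖v‖ ^ 2) ^ (p - 2) * (2 * β) ^ 2) * (v i) ^ 2 := by
    intro i
    set E := EuclideanSpace.single (𝕜 := ℝ) i (1 : ℝ) with hE
    have hfun : (fun w => fderiv ℝ (fun w : Phase d => (K + β * ‖w‖ ^ 2) ^ p) w E)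
        = (fun w => (p * (K + β * ‖w‖ ^ 2) ^ (p - 1) * (2 * β)) * ⟪w, E⟫) := by
      funext w
      rw [ke_fderiv_rpow_base d K β p w (hpos w)]
    rw [hfun]
    have hc : HasFDerivAt (fun w : Phase d => p * (K + β * ‖w‖ ^ 2) ^ (p - 1) * (2 * β))
        (((2 * β * p) * ((p - 1) * (K + β * ‖v‖ ^ 2) ^ (p - 1 - 1) * (2 * β))) • innerSL ℝ v)
        v := by
      have h1 := (ke_hasFDerivAt_rpow_base d K β (p - 1) v (hpos v)).const_mul (2 * β * p)
      refine (h1.congr_fderiv ?_).congr_of_eventuallyEq (Filter.Eventually.of_forall fun w => ?_)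
      · rw [smul_smul]
      · ring
    have hl : HasFDerivAt (fun w : Phase d => ⟪w, E⟫) (innerSL ℝ E) v := by
      have := (innerSL ℝ E).hasFDerivAt (x := v)
      apply this.congr_of_eventuallyEq
      filter_upwards with w
      exact real_inner_comm _ _
    have : HasFDerivAt (fun w : Phase d => p * (K + β * ‖w‖ ^ 2) ^ (p - 1) * (2 * β) * ⟪w, E⟫) _ v := hc.mul hl
    rw [this.fderiv]
    have hEE : (inner ℝ E E : ℝ) = 1 := by
      rw [hE, EuclideanSpace.inner_single_right]
      simp [EuclideanSpace.single_apply]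
    have hvE : (inner ℝ v E : ℝ) = v i := by
      rw [hE, EuclideanSpace.inner_single_right]; simp
    have hEv : (inner ℝ E v : ℝ) = v i := by
      rw [real_inner_comm]; exact hvE
    simp only [ContinuousLinearMap.add_apply, ContinuousLinearMap.smul_apply,
      innerSL_apply_apply, smul_eq_mul]
    rw [show p - 1 - 1 = p - 2 by ring]
    simp only [innerSL_apply_apply, hEE, hvE, hEv]
    ring
  simp only [key]
  rw [Finset.sum_add_distrib]
  simp only [Finset.sum_const, Finset.card_univ, Fintype.card_fin, nsmul_eq_mul,
    ← Finset.mul_sum, ke_sum_sq_eq_norm_sq]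
  ring


/-- `h₀ = g_⋆^{2−m}` is in the kernel of the linearized operator `ℒ`. -/
theorem kernel_eigenfunction (d : ℕ) (hd : 1 ≤ d) (m : ℝ)
    (hm : m ∈ Ioo (1 - 1 / (d : ℝ)) 1)
    (A : ℝ) (hA : A = (1 + (d : ℝ) - (d : ℝ) * m) / (3 - (d : ℝ) + (d : ℝ) * m))
    (γs : ℝ) (hγs : (1 - m) * γs > 0)
    (hnorm : (∫ p : Phase d × Phase d, gPpos d m A γs p.1 p.2) = 1)
    (h₀ : Phase d → Phase d → ℝ)
    (hh₀ : h₀ = fun x v => gPpos d m A γs x v ^ (2 - m)) :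
    ∀ x v : Phase d, Lop d m A (gPpos d m A γs) h₀ x v = 0 := by
  obtain ⟨hm1, hm2⟩ := hm
  intro x v
  have hd1 : (1:ℝ) ≤ (d:ℝ) := by exact_mod_cast hd
  have hd0 : (0:ℝ) < d := by linarith
  have hinv : 1/(d:ℝ) ≤ 1 := by rw [div_le_one hd0]; exact hd1
  have hm0 : 0 < m := by linarith
  have hmne : m - 1 ≠ 0 := by linarith
  have hdd : (d:ℝ) * (1/(d:ℝ)) = 1 := by field_simp
  have hdm1 : (d:ℝ) * m > (d:ℝ) - 1 := by nlinarith
  have hdm2 : (d:ℝ) * m < d := by nlinarith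
  have hA0 : 0 < A := by
    rw [hA]; apply div_pos <;> nlinarith
  have h1A : 0 < 1 + A := by linarith
  have hγ : 0 < γs := by nlinarith
  set c := (1-m)/m with hc
  have hc0 : 0 < c := div_pos (by linarith) hm0
  set β := c * ((1+A)/2) with hβdef
  set δ := c * ((1+A)*A/2) with hδdef
  have hβ0 : 0 < β := mul_pos hc0 (by linarith)
  have hδ0 : 0 < δ := mul_pos hc0 (by positivity)
  set p := 1/(m-1) with hp
  set q := p*(2-m) with hq
  set K := c*γs + δ*‖x‖^2 with hK
  set K' := c*γs + β*‖v‖^2 with hK'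
  have hKpos : 0 < K := by rw [hK]; positivity
  have hK'pos : 0 < K' := by rw [hK']; positivity
  have hQpos : 0 < K + β*‖v‖^2 := by positivity
  have hQ'pos : 0 < K' + δ*‖x‖^2 := by positivity
  have hQ' : K' + δ*‖x‖^2 = K + β*‖v‖^2 := by rw [hK, hK']; ring
  have hbpos : ∀ y w : Phase d, 0 < (c*γs + δ*‖y‖^2) + β*‖w‖^2 := fun y w => by positivity
  have hgP : ∀ y w : Phase d, gPpos d m A γs y w = ((c*γs + δ*‖y‖^2) + β*‖w‖^2) ^ p := by
    intro y w
    rw [gPpos, hp]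
    congr 1
    rw [hβdef, hδdef, hc]; ring
  have hprod : (fun w => gPpos d m A γs x w ^ (m-1) * h₀ x w)
      = fun w : Phase d => (K + β*‖w‖^2)^p := by
    funext w
    simp only [hh₀, hgP]
    rw [← Real.rpow_mul (hbpos x w).le, ← Real.rpow_mul (hbpos x w).le,
      ← Real.rpow_add (hbpos x w), hK]
    congr 1
    ring
  have hh₀v : (fun w => h₀ x w) = fun w : Phase d => (K + β*‖w‖^2)^q := by
    funext w
    simp only [hh₀, hgP]
    rw [← Real.rpow_mul (hbpos x w).le, hK, ← hq]
  have hxfun : (fun y => h₀ y v) = fun y : Phase d => (K' + δ*‖y‖^2)^q := by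
    funext y
    simp only [hh₀, hgP]
    rw [← Real.rpow_mul (hbpos y v).le, hK', ← hq]
    congr 1
    ring
  have hval : h₀ x v = (K + β*‖v‖^2) ^ q := by
    simp only [hh₀, hgP]
    rw [← Real.rpow_mul (hbpos x v).le, hK, ← hq]
  rw [Lop, hprod, hh₀v, hxfun, hval, lapv]
  rw [ke_lapv_rpow d K β p hKpos hβ0.le v]
  rw [ke_fderiv_rpow_base d K β q v hQpos v]
  rw [ke_fderiv_rpow_base d K' δ q x hQ'pos v]
  rw [ke_fderiv_rpow_base d K β q v hQpos x]
  rw [hQ', real_inner_self_eq_norm_sq, real_inner_comm v x]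
  have he1 : p - 1 = q := by rw [hq, hp]; field_simp; ring
  have he2 : p - 2 = q - 1 := by rw [hq, hp]; field_simp; ring
  rw [he1, he2]
  have hc1 : m*(2*β*p) + (1+A) = 0 := by
    rw [hβdef, hc, hp]; field_simp; ring
  have hc2 : m*(4*β^2*p*(p-1)) + (1+A)*(q*2*β) = 0 := by
    rw [hq, hβdef, hc, hp]; field_simp; ring
  have hc3 : δ = A*β := by rw [hδdef, hβdef]; ring
  rw [hc3]
  clear_value c β δ p q K K'
  linear_combination ((d:ℝ)*(K + β*‖v‖^2)^q)*hc1 + (‖v‖^2*(K + β*‖v‖^2)^(q-1))*hc2 - (4*m*β^2*p*(K + β*‖v‖^2)^(q-1)*‖v‖^2)*he1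
end
end
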